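/- arXiv:2012.15142 — 4 statements merged into one kernel-verified Lean document; each statement's English description precedes it below -/
import Mathlib

section
/- For n ≥ (s+1)·k, the maximum size of a family F of k-subsets of {1,...,n} with matching number at most s and clique number at least sk+k-2 equals max{ C(sk+k-1, k), C(sk+k-2, k) + C(sk+k-3, k-2)·(n - sk - k + 2) }. -/
/-! Let `Q` be a clique of size `q = sk + k - 2`. A member `A` meeting `Q` in at most `k - 2`
points would leave `sk` points of `Q \ A`, hence `s` disjoint `k`-sets of the clique, and with
`A` a matching of size `s + 1`; so every member meets `Q` in `k` or `k - 1` points. Those of the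
second kind have exactly one point outside `Q`, and any two of them intersect, since otherwise
`Q \ (A ∪ B)` would still contain `s - 1` disjoint `k`-sets. Grouping them by the outside point
gives pairwise cross-intersecting families of `(k-1)`-subsets of `Q`, whose total size is at most
`max (C(q, k-1)) ((n - q) C(q-1, k-2))` by Katona's cyclic-permutation argument: on a cycle of
length `q`, arcs of length `ℓ` taken from `m` pairwise cross-intersecting families number at most
`max q (m ℓ)`. Adding the at most `C(q, k)` members inside `Q` and using Pascal's rule gives the
bound, attained by all `k`-subsets of `[sk + k - 1]` and by `extendedClique`. -/

open Finset

/-- Coordinatewise (shifting) partial order on finite sets of naturals: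
`A ≼ B` iff the increasing enumerations satisfy `aₗ ≤ bₗ` for all `l`. -/
def shiftLE (A B : Finset ℕ) : Prop :=
  List.Forall₂ (· ≤ ·) (A.sort (· ≤ ·)) (B.sort (· ≤ ·))

/-- A family on the ground set `{1,…,n}` is shifted. -/
def IsShifted (n : ℕ) (F : Finset (Finset ℕ)) : Prop :=
  ∀ B ∈ F, ∀ A ⊆ Finset.Icc 1 n, shiftLE A B → A ∈ F

/-- The matching number of `F` is at most `s`. -/
def MatchingLE (F : Finset (Finset ℕ)) (s : ℕ) : Prop :=
  ∀ M ⊆ F, (M : Set (Finset ℕ)).PairwiseDisjoint id → M.card ≤ s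

/-- `F` contains `s` pairwise disjoint members. -/
def HasMatching (F : Finset (Finset ℕ)) (s : ℕ) : Prop :=
  ∃ M ⊆ F, (M : Set (Finset ℕ)).PairwiseDisjoint id ∧ M.card = s

/-- The clique number of `F` (as a `k`-graph on `{1,…,n}`) is at least `q`. -/
def HasClique (n : ℕ) (F : Finset (Finset ℕ)) (k q : ℕ) : Prop :=
  ∃ Q ⊆ Finset.Icc 1 n, Q.card = q ∧ Q.powersetCard k ⊆ F

namespace Finset

variable {α : Type*} [DecidableEq α]

theorem sum_card_inter_le_card_of_pairwiseDisjoint {M : Finset (Finset α)}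
    (hM : (M : Set (Finset α)).PairwiseDisjoint id) (Y : Finset α) :
    ∑ A ∈ M, #(A ∩ Y) ≤ #Y := by
  rw [← card_biUnion (t := (· ∩ Y)) (hM.mono fun A => inter_subset_left)]
  exact card_le_card (biUnion_subset.2 fun A _ => inter_subset_right)

theorem exists_pairwiseDisjoint_subset_powersetCard {k : ℕ} (hk : 0 < k) :
    ∀ (s : ℕ) (Y : Finset α), s * k ≤ #Y →
      ∃ M ⊆ Y.powersetCard k, (M : Set (Finset α)).PairwiseDisjoint id ∧ #M = s
  | 0, _, _ => ⟨∅, empty_subset _, by simp, rfl⟩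
  | s + 1, Y, hY => by
    rw [add_mul, one_mul] at hY
    obtain ⟨T, hTY, hT⟩ := Y.exists_subset_card_eq (n := k) (by omega)
    obtain ⟨M, hMY, hMd, hMs⟩ := exists_pairwiseDisjoint_subset_powersetCard hk s (Y \ T)
      (by rw [card_sdiff_of_subset hTY, hT]; omega)
    have hTM : ∀ A ∈ M, Disjoint T A := fun A hA =>
      disjoint_of_subset_right (mem_powersetCard.1 (hMY hA)).1 disjoint_sdiff
    have hT_notMem : T ∉ M := fun h => by
      rw [(disjoint_self_iff_empty _).1 (hTM T h), card_empty] at hT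
      omega
    refine ⟨insert T M, ?_, ?_, by rw [card_insert_of_notMem hT_notMem, hMs]⟩
    · exact insert_subset (mem_powersetCard.2 ⟨hTY, hT⟩)
        (hMY.trans (powersetCard_mono sdiff_subset))
    · rw [coe_insert]
      exact hMd.insert fun A hA _ => hTM A hA

theorem card_filter_add_card_filter_le_of_forall_eq {ι : Type*} {I : Finset ι}
    (hI : 2 ≤ #I) {p r : ι → Prop} [DecidablePred p] [DecidablePred r]
    (h : ∀ i ∈ I, ∀ j ∈ I, p i → r j → i = j) : #{i ∈ I | p i} + #{i ∈ I | r i} ≤ #I := by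
  by_cases hp : {i ∈ I | p i}.Nonempty
  · by_cases hr : {i ∈ I | r i}.Nonempty
    · obtain ⟨i, hi⟩ := hp
      obtain ⟨j, hj⟩ := hr
      rw [mem_filter] at hi hj
      have hp1 : #{i ∈ I | p i} ≤ 1 := card_le_one.2 fun a ha b hb => by
        rw [mem_filter] at ha hb
        rw [h a ha.1 j hj.1 ha.2 hj.2, h b hb.1 j hj.1 hb.2 hj.2]
      have hr1 : #{i ∈ I | r i} ≤ 1 := card_le_one.2 fun a ha b hb => by
        rw [mem_filter] at ha hb
        rw [← h i hi.1 a ha.1 hi.2 ha.2, ← h i hi.1 b hb.1 hi.2 hb.2]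
      omega
    · rw [not_nonempty_iff_eq_empty.1 hr, card_empty, add_zero]
      exact card_filter_le _ _
  · rw [not_nonempty_iff_eq_empty.1 hp, card_empty, zero_add]
    exact card_filter_le _ _

theorem exists_perm_map_eq [Fintype α] {S S' : Finset α} (h : #S = #S') :
    ∃ π : Equiv.Perm α, S.map π.toEmbedding = S' := by
  let π := (Finset.equivOfCardEq h).extendSubtype
  refine ⟨π, eq_of_subset_of_card_le (fun y hy => ?_) (by rw [card_map, h])⟩
  obtain ⟨x, hx, rfl⟩ := mem_map.1 hy
  exact (Finset.equivOfCardEq h).extendSubtype_mem x hx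

theorem sdiff_eq_singleton_of_card_sdiff_eq_one {A Q : Finset α} (h : #(A \ Q) = 1) {x : α}
    (hxA : x ∈ A) (hxQ : x ∉ Q) : A \ Q = {x} := by
  obtain ⟨y, hy⟩ := card_eq_one.1 h
  have hx : x ∈ A \ Q := mem_sdiff.2 ⟨hxA, hxQ⟩
  rw [hy, mem_singleton] at hx
  rw [hy, hx]

theorem eq_of_subtype_eq_of_sdiff_eq {A B Q : Finset α}
    (h : A.subtype (· ∈ Q) = B.subtype (· ∈ Q)) (h' : A \ Q = B \ Q) : A = B := by
  ext a
  by_cases ha : a ∈ Q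
  · rw [← mem_subtype (p := (· ∈ Q)) (a := ⟨a, ha⟩), h, mem_subtype]
  · calc a ∈ A ↔ a ∈ A \ Q := by simp [ha]
      _ ↔ a ∈ B \ Q := by rw [h']
      _ ↔ a ∈ B := by simp [ha]

end Finset

theorem ZMod.sum_eq_sum_range {M : Type*} [AddCommMonoid M] {q : ℕ} [NeZero q]
    (f : ZMod q → M) : ∑ t, f t = ∑ i ∈ range q, f i :=
  (sum_nbij' (fun i : ℕ => (i : ZMod q)) ZMod.val (by simp) (by simp [ZMod.val_lt])
    (fun i hi => ZMod.val_cast_of_lt (mem_range.1 hi)) (by simp) (by simp)).symm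

def cyclicInterval (q ℓ : ℕ) (t : ZMod q) : Finset (ZMod q) :=
  (range ℓ).image fun r : ℕ => t + r

section CyclicInterval

variable {q ℓ : ℕ}

theorem card_cyclicInterval (h : ℓ ≤ q) (t : ZMod q) : #(cyclicInterval q ℓ t) = ℓ := by
  rw [cyclicInterval, card_image_of_injOn, card_range]
  intro r hr r' hr' hrr'
  simp only [coe_range, Set.mem_Iio, add_right_inj] at hr hr' hrr'
  rw [ZMod.natCast_eq_natCast_iff', Nat.mod_eq_of_lt (by omega), Nat.mod_eq_of_lt (by omega)]
    at hrr'
  exact hrr'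

theorem disjoint_cyclicInterval_add {d : ℕ} (h₁ : ℓ ≤ d) (h₂ : d + ℓ ≤ q) (t : ZMod q) :
    Disjoint (cyclicInterval q ℓ t) (cyclicInterval q ℓ (t + d)) := by
  simp only [cyclicInterval, disjoint_left, mem_image, mem_range, not_exists, not_and]
  rintro _ ⟨r, hr, rfl⟩ r' hr' h
  rw [add_assoc, add_right_inj, ← Nat.cast_add, ZMod.natCast_eq_natCast_iff',
    Nat.mod_eq_of_lt (by omega), Nat.mod_eq_of_lt (by omega)] at h
  omega

theorem sum_le_of_disjoint_cyclicInterval [NeZero q] (hq : 2 * ℓ ≤ q) {f : ZMod q → ℕ}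
    {m : ℕ} (t₀ : ZMod q)
    (hfar : ∀ u, Disjoint (cyclicInterval q ℓ t₀) (cyclicInterval q ℓ u) → f u = 0)
    (hpair : ∀ u v, Disjoint (cyclicInterval q ℓ u) (cyclicInterval q ℓ v) → f u + f v ≤ m) :
    ∑ t, f t ≤ m * ℓ := by
  obtain ⟨r, hr⟩ : ∃ r, q = ℓ + r + ℓ := ⟨q - 2 * ℓ, by omega⟩
  have hmid : ∑ i ∈ range r, f (t₀ + ↑(ℓ + i)) = 0 :=
    sum_eq_zero fun i hi => hfar _ <|
      disjoint_cyclicInterval_add (d := ℓ + i) (by omega) (by rw [mem_range] at hi; omega) t₀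
  -- the remaining positions pair up as `t₀ + i` and `t₀ + i - ℓ` for `i < ℓ`
  calc ∑ t, f t = ∑ v, f (t₀ + v) := (Equiv.sum_comp (Equiv.addLeft t₀) f).symm
    _ = ∑ i ∈ range (ℓ + r + ℓ), f (t₀ + i) := by rw [← hr]; exact ZMod.sum_eq_sum_range _
    _ = ∑ i ∈ range ℓ, (f (t₀ + ↑(ℓ + r + i)) + f (t₀ + ↑(ℓ + r + i) + ↑ℓ)) := by
      rw [sum_range_add, sum_range_add, hmid, add_zero, add_comm, ← sum_add_distrib]
      refine sum_congr rfl fun i _ => ?_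
      have hwrap : ((ℓ + r + i : ℕ) : ZMod q) + ℓ = i := by
        rw [← Nat.cast_add, show ℓ + r + i + ℓ = q + i by omega, Nat.cast_add,
          ZMod.natCast_self, zero_add]
      rw [add_assoc t₀, hwrap]
    _ ≤ ∑ i ∈ range ℓ, m := sum_le_sum fun i _ =>
      hpair _ _ (disjoint_cyclicInterval_add (d := ℓ) le_rfl (by omega) _)
    _ = m * ℓ := by rw [sum_const, card_range, smul_eq_mul, mul_comm]

theorem sum_card_le_of_not_disjoint_cyclicInterval {ι : Type*} [NeZero q] (hq : 2 * ℓ ≤ q)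
    (I : Finset ι) (J : ι → Finset (ZMod q))
    (hJ : ∀ i ∈ I, ∀ j ∈ I, i ≠ j → ∀ t ∈ J i, ∀ u ∈ J j,
      ¬ Disjoint (cyclicInterval q ℓ t) (cyclicInterval q ℓ u)) :
    ∑ i ∈ I, #(J i) ≤ max q (#I * ℓ) := by
  set mult : ZMod q → ℕ := fun t => #{i ∈ I | t ∈ J i}
  have hsum : ∑ i ∈ I, #(J i) = ∑ t, mult t := by
    simpa [bipartiteAbove, bipartiteBelow] using
      sum_card_bipartiteAbove_eq_sum_card_bipartiteBelow (s := I) (t := univ)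
        (r := fun i t => t ∈ J i)
  rw [hsum]
  by_contra! hlt
  obtain ⟨t₀, -, ht₀⟩ : ∃ t ∈ univ, 1 < mult t :=
    exists_lt_of_sum_lt (by simpa using (le_max_left _ _).trans_lt hlt)
  obtain ⟨i₁, hi₁, i₂, hi₂, hne⟩ := one_lt_card.1 ht₀
  rw [mem_filter] at hi₁ hi₂
  have hI : 2 ≤ #I := one_lt_card.2 ⟨i₁, hi₁.1, i₂, hi₂.1, hne⟩
  have hfar : ∀ u, Disjoint (cyclicInterval q ℓ t₀) (cyclicInterval q ℓ u) → mult u = 0 := by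
    refine fun u hu => card_eq_zero.2 (filter_eq_empty_iff.2 fun i hi hui => ?_)
    obtain ⟨j, hj, hij, ht₀j⟩ : ∃ j ∈ I, i ≠ j ∧ t₀ ∈ J j := by
      by_cases h : i = i₁
      · exact ⟨i₂, hi₂.1, h ▸ hne, hi₂.2⟩
      · exact ⟨i₁, hi₁.1, h, hi₁.2⟩
    exact hJ i hi j hj hij u hui t₀ ht₀j hu.symm
  have hpair : ∀ u v, Disjoint (cyclicInterval q ℓ u) (cyclicInterval q ℓ v) →
      mult u + mult v ≤ #I := fun u v huv =>
    card_filter_add_card_filter_le_of_forall_eq hI fun i hi j hj hu hv =>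
      by_contra fun hij => hJ i hi j hj hij u hu v hv huv
  exact (sum_le_of_disjoint_cyclicInterval hq t₀ hfar hpair |>.trans
    (le_max_right _ _)).not_gt hlt

end CyclicInterval

theorem Nat.choose_mul_max_mul_eq {q ℓ : ℕ} (hq : 1 ≤ q) (hℓ : 1 ≤ ℓ) (m : ℕ) :
    q.choose ℓ * max q (m * ℓ) = q * max (q.choose ℓ) (m * (q - 1).choose (ℓ - 1)) := by
  have hchoose := Nat.add_one_mul_choose_eq (q - 1) (ℓ - 1)
  rw [Nat.sub_add_cancel hq, Nat.sub_add_cancel hℓ] at hchoose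
  rw [← max_mul_mul_left, ← max_mul_mul_left, mul_left_comm _ m, ← hchoose, mul_left_comm,
    mul_comm]

section Averaging

variable {α β : Type*} [Fintype α] [DecidableEq α] [Fintype β] [DecidableEq β]

theorem card_filter_equiv_map_eq_congr (A : Finset β) {S S' : Finset α} (h : #S = #S') :
    #{σ : β ≃ α | A.map σ.toEmbedding = S} = #{σ : β ≃ α | A.map σ.toEmbedding = S'} := by
  obtain ⟨π, hπ⟩ := exists_perm_map_eq h
  refine card_nbij' (fun σ => σ.trans π) (fun σ => σ.trans π.symm) ?_ ?_ ?_ ?_ <;>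
    intro σ hσ
  · simp only [coe_filter, mem_univ, true_and, Set.mem_ofPred_eq] at hσ ⊢
    rw [Equiv.trans_toEmbedding, ← map_map, hσ, hπ]
  · simp only [coe_filter, mem_univ, true_and, Set.mem_ofPred_eq] at hσ ⊢
    rw [Equiv.trans_toEmbedding, ← map_map, hσ, ← hπ, map_map, ← Equiv.trans_toEmbedding,
      Equiv.self_trans_symm, Equiv.refl_toEmbedding, map_refl]
  · ext; simp
  · ext; simp

theorem choose_mul_card_filter_equiv_map_eq {A : Finset β} {S : Finset α} (h : #A = #S) :
    (Fintype.card α).choose #S * #{σ : β ≃ α | A.map σ.toEmbedding = S} =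
      Fintype.card (β ≃ α) := by
  symm
  calc Fintype.card (β ≃ α)
      = ∑ S' ∈ univ.powersetCard #S, #{σ : β ≃ α | A.map σ.toEmbedding = S'} :=
        card_eq_sum_card_fiberwise fun σ _ => by simp [h]
    _ = _ := by
      rw [sum_congr rfl fun S' hS' => card_filter_equiv_map_eq_congr A
        (mem_powersetCard.1 hS').2, sum_const, card_powersetCard,
        card_univ, smul_eq_mul]

theorem choose_mul_card_filter_equiv_map_mem {A : Finset β} {ℓ : ℕ} (hA : #A = ℓ)
    {G : Finset (Finset α)} (hG : ∀ S ∈ G, #S = ℓ) :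
    (Fintype.card α).choose ℓ * #{σ : β ≃ α | A.map σ.toEmbedding ∈ G} =
      #G * Fintype.card (β ≃ α) := by
  rw [card_eq_sum_card_fiberwise (t := G) (s := {σ : β ≃ α | A.map σ.toEmbedding ∈ G})
    (f := fun σ : β ≃ α => A.map σ.toEmbedding) (fun σ hσ => (mem_filter.1 hσ).2), mul_sum,
    ← smul_eq_mul, ← sum_const]
  refine sum_congr rfl fun S hS => ?_
  have hfilter : ∀ σ ∈ (univ : Finset (β ≃ α)),
      A.map σ.toEmbedding ∈ G ∧ A.map σ.toEmbedding = S ↔ A.map σ.toEmbedding = S :=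
    fun σ _ => ⟨And.right, fun h => ⟨h ▸ hS, h⟩⟩
  rw [filter_filter, filter_congr hfilter, ← hG S hS]
  exact choose_mul_card_filter_equiv_map_eq (hA.trans (hG S hS).symm)

theorem sum_card_le_of_pairwise_not_disjoint {ι : Type*} {ℓ : ℕ} (hℓ : 1 ≤ ℓ)
    (hq : 2 * ℓ ≤ Fintype.card α) (I : Finset ι) (G : ι → Finset (Finset α))
    (hG : ∀ i ∈ I, ∀ S ∈ G i, #S = ℓ)
    (hcross : ∀ i ∈ I, ∀ j ∈ I, i ≠ j → ∀ S ∈ G i, ∀ T ∈ G j, ¬ Disjoint S T) :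
    ∑ i ∈ I, #(G i) ≤
      max ((Fintype.card α).choose ℓ) (#I * (Fintype.card α - 1).choose (ℓ - 1)) := by
  set q := Fintype.card α
  have : NeZero q := ⟨by omega⟩
  set P := Fintype.card (ZMod q ≃ α)
  have hP : 0 < P := Fintype.card_pos_iff.2 ⟨Fintype.equivOfCardEq (ZMod.card q)⟩
  let J : ι → (ZMod q ≃ α) → Finset (ZMod q) := fun i σ =>
    {t | (cyclicInterval q ℓ t).map σ.toEmbedding ∈ G i}
  -- double counting pairs `(σ, t)`: every `ℓ`-set is the image of an interval under the
  -- same number of `σ`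
  have hcount : ∀ i ∈ I, q.choose ℓ * ∑ σ, #(J i σ) = q * #(G i) * P := by
    intro i hi
    have hswap := sum_card_bipartiteAbove_eq_sum_card_bipartiteBelow
      (s := (univ : Finset (ZMod q ≃ α))) (t := univ)
      (r := fun σ t => (cyclicInterval q ℓ t).map σ.toEmbedding ∈ G i)
    simp only [bipartiteAbove, bipartiteBelow] at hswap
    rw [hswap, mul_sum, sum_congr rfl fun t _ =>
      choose_mul_card_filter_equiv_map_mem (card_cyclicInterval (by omega) t) (hG i hi),
      sum_const, card_univ, ZMod.card, smul_eq_mul, mul_assoc]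
  have hcycle : ∀ σ, ∑ i ∈ I, #(J i σ) ≤ max q (#I * ℓ) := fun σ =>
    sum_card_le_of_not_disjoint_cyclicInterval hq I (fun i => J i σ)
      fun i hi j hj hij t ht u hu hdis => hcross i hi j hj hij _ (mem_filter.1 ht).2 _
        (mem_filter.1 hu).2 ((disjoint_map _).2 hdis)
  have hmain : q * (∑ i ∈ I, #(G i)) * P ≤
      q * max (q.choose ℓ) (#I * (q - 1).choose (ℓ - 1)) * P :=
    calc q * (∑ i ∈ I, #(G i)) * P = ∑ i ∈ I, q.choose ℓ * ∑ σ, #(J i σ) := by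
          rw [mul_sum, sum_mul]; exact sum_congr rfl fun i hi => (hcount i hi).symm
      _ = q.choose ℓ * ∑ σ, ∑ i ∈ I, #(J i σ) := by rw [← mul_sum, sum_comm]
      _ ≤ q.choose ℓ * ∑ _σ : ZMod q ≃ α, max q (#I * ℓ) := by gcongr with σ; exact hcycle σ
      _ = q * max (q.choose ℓ) (#I * (q - 1).choose (ℓ - 1)) * P := by
        rw [sum_const, card_univ, smul_eq_mul]
        change q.choose ℓ * (P * _) = _
        rw [mul_left_comm, Nat.choose_mul_max_mul_eq (by omega) hℓ, mul_comm]
  exact Nat.le_of_mul_le_mul_left (Nat.le_of_mul_le_mul_right hmain hP) (by omega)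

end Averaging

theorem Finset.card_eq_sum_card_filter_mem_of_card_sdiff_eq_one {α : Type*} [DecidableEq α]
    {X Q : Finset α} {F : Finset (Finset α)} (hF : ∀ A ∈ F, A ⊆ X ∧ #(A \ Q) = 1) :
    #F = ∑ x ∈ X \ Q, #{A ∈ F | x ∈ A} := by
  have hswap := sum_card_bipartiteAbove_eq_sum_card_bipartiteBelow (s := F) (t := X \ Q)
    (r := fun A x => x ∈ A)
  simp only [bipartiteAbove, bipartiteBelow] at hswap
  rw [← hswap, card_eq_sum_ones]
  refine sum_congr rfl fun A hA => ?_
  rw [← (hF A hA).2, filter_mem_eq_inter, inter_comm, ← inter_sdiff_assoc,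
    inter_eq_left.2 (hF A hA).1]

theorem Finset.card_le_of_intersecting_of_card_sdiff_eq_one {α : Type*} [DecidableEq α]
    {X Q : Finset α} {ℓ : ℕ} (hℓ : 1 ≤ ℓ) (hQ : 2 * ℓ ≤ #Q) {F : Finset (Finset α)}
    (hF : ∀ A ∈ F, A ⊆ X ∧ #(A ∩ Q) = ℓ ∧ #(A \ Q) = 1)
    (hint : (F : Set (Finset α)).Intersecting) :
    #F ≤ max ((#Q).choose ℓ) (#(X \ Q) * (#Q - 1).choose (ℓ - 1)) := by
  have hout : ∀ A ∈ F, ∀ x ∈ X \ Q, x ∈ A → A \ Q = {x} := fun A hA x hx hxA =>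
    sdiff_eq_singleton_of_card_sdiff_eq_one (hF A hA).2.2 hxA (mem_sdiff.1 hx).2
  let trace : Finset α → Finset Q := fun A => A.subtype (· ∈ Q)
  have hbound := sum_card_le_of_pairwise_not_disjoint hℓ (by rwa [Fintype.card_coe]) (X \ Q)
    (fun x => image trace {A ∈ F | x ∈ A}) ?_ ?_
  · rw [Fintype.card_coe] at hbound
    rw [card_eq_sum_card_filter_mem_of_card_sdiff_eq_one fun A hA => ⟨(hF A hA).1, (hF A hA).2.2⟩]
    refine le_trans (le_of_eq (sum_congr rfl fun x hx => ?_)) hbound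
    refine (card_image_of_injOn fun A hA B hB hAB => ?_).symm
    rw [mem_coe, mem_filter] at hA hB
    exact eq_of_subtype_eq_of_sdiff_eq hAB
      ((hout A hA.1 x hx hA.2).trans (hout B hB.1 x hx hB.2).symm)
  · intro x _ S hS
    obtain ⟨A, hA, rfl⟩ := mem_image.1 hS
    rw [card_subtype, filter_mem_eq_inter, (hF A (mem_filter.1 hA).1).2.1]
  · intro x hx y hy hxy S hS T hT hST
    obtain ⟨A, hA, rfl⟩ := mem_image.1 hS
    obtain ⟨B, hB, rfl⟩ := mem_image.1 hT
    rw [mem_filter] at hA hB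
    obtain ⟨a, haA, haB⟩ := not_disjoint_iff.1 (hint hA.1 hB.1)
    by_cases ha : a ∈ Q
    · exact disjoint_left.1 hST ((mem_subtype (a := ⟨a, ha⟩)).2 haA)
        ((mem_subtype (a := ⟨a, ha⟩)).2 haB)
    · have hax := hout A hA.1 x hx hA.2 ▸ mem_sdiff.2 ⟨haA, ha⟩
      have hay := hout B hB.1 y hy hB.2 ▸ mem_sdiff.2 ⟨haB, ha⟩
      exact hxy ((mem_singleton.1 hax).symm.trans (mem_singleton.1 hay))

section UpperBound

variable {F : Finset (Finset ℕ)} {Q : Finset ℕ} {s k : ℕ}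

theorem MatchingLE.card_add_le (hF : MatchingLE F s) (hQ : Q.powersetCard k ⊆ F) (hk : 0 < k)
    {N : Finset (Finset ℕ)} (hNF : N ⊆ F) (hN : (N : Set (Finset ℕ)).PairwiseDisjoint id)
    {t : ℕ} (ht : t * k ≤ #(Q \ N.sup id)) : #N + t ≤ s := by
  obtain ⟨M, hMQ, hMd, rfl⟩ := exists_pairwiseDisjoint_subset_powersetCard hk t _ ht
  have hNM : ∀ A ∈ N, ∀ C ∈ M, Disjoint A C := fun A hA C hC =>
    disjoint_of_subset_left (le_sup (f := id) hA)
      (disjoint_of_subset_right (mem_powersetCard.1 (hMQ hC)).1 disjoint_sdiff)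
  have hdisj : Disjoint N M := disjoint_left.2 fun C hCN hCM => by
    have hCk := (mem_powersetCard.1 (hMQ hCM)).2
    rw [(disjoint_self_iff_empty _).1 (hNM C hCN C hCM), card_empty] at hCk
    omega
  rw [← card_union_of_disjoint hdisj]
  refine hF _ (union_subset hNF (hMQ.trans (powersetCard_mono sdiff_subset) |>.trans hQ)) ?_
  rw [coe_union, Set.pairwiseDisjoint_union]
  exact ⟨hN, hMd, fun A hA C hC _ => hNM A hA C hC⟩

theorem MatchingLE.sub_one_le_card_inter (hF : MatchingLE F s) (hQF : Q.powersetCard k ⊆ F)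
    (hQ : #Q = s * k + k - 2) (hk : 0 < k) {A : Finset ℕ} (hA : A ∈ F) : k - 1 ≤ #(A ∩ Q) := by
  by_contra! h
  have hQA := card_sdiff_add_card_inter Q A
  rw [inter_comm] at hQA
  have := hF.card_add_le hQF hk (singleton_subset_iff.2 hA) (by simp) (t := s)
    (by rw [sup_singleton, id]; omega)
  simp at this

theorem MatchingLE.card_inter_eq_and_card_sdiff_eq_one (hF : MatchingLE F s)
    (hQF : Q.powersetCard k ⊆ F) (hQ : #Q = s * k + k - 2) {A : Finset ℕ} (hA : A ∈ F)
    (hAk : #A = k) (hAQ : ¬A ⊆ Q) : #(A ∩ Q) = k - 1 ∧ #(A \ Q) = 1 := by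
  have hpos : 0 < #(A \ Q) := card_pos.2 (sdiff_nonempty.2 hAQ)
  have hsum : #(A ∩ Q) + #(A \ Q) = k := (card_inter_add_card_sdiff A Q).trans hAk
  have := hF.sub_one_le_card_inter hQF hQ (by omega) hA
  omega

theorem MatchingLE.not_disjoint (hF : MatchingLE F s) (hQF : Q.powersetCard k ⊆ F)
    (hQ : #Q = s * k + k - 2) (hk : 2 ≤ k) (hs : 1 ≤ s) {A B : Finset ℕ} (hA : A ∈ F)
    (hB : B ∈ F) (hAQ : #(A ∩ Q) = k - 1) (hBQ : #(B ∩ Q) = k - 1) : ¬ Disjoint A B := by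
  intro hAB
  have hne : A ≠ B := by
    rintro rfl
    rw [(disjoint_self_iff_empty A).1 hAB, empty_inter, card_empty] at hAQ
    omega
  have hQAB : #(Q ∩ (A ∪ B)) ≤ #(A ∩ Q) + #(B ∩ Q) := by
    rw [inter_union_distrib_left, inter_comm Q, inter_comm Q]
    exact card_union_le _ _
  have hsplit := card_sdiff_add_card_inter Q (A ∪ B)
  have := hF.card_add_le hQF (by omega) (N := {A, B})
    (insert_subset hA (singleton_subset_iff.2 hB))
    (by rw [coe_pair]; exact Set.pairwise_pair.2 fun _ => ⟨hAB, hAB.symm⟩) (t := s - 1)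
    (by
      have hsk : k ≤ s * k := Nat.le_mul_of_pos_left k hs
      simp only [sup_insert, sup_singleton, id_eq, sup_eq_union, Nat.sub_mul, one_mul]
      omega)
  rw [card_pair hne] at this
  omega

theorem card_le_of_matchingLE_of_hasClique {n : ℕ} (hk : 2 ≤ k) (hs : 1 ≤ s)
    (hF : F ⊆ (Icc 1 n).powersetCard k) (hM : MatchingLE F s)
    (hQ : HasClique n F k (s * k + k - 2)) :
    #F ≤ max ((s * k + k - 1).choose k)
      ((s * k + k - 2).choose k + (s * k + k - 3).choose (k - 2) * (n - (s * k + k - 2))) := by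
  obtain ⟨Q, hQn, hQ, hQF⟩ := hQ
  have hFk : ∀ A ∈ F, A ⊆ Icc 1 n ∧ #A = k := fun A hA => mem_powersetCard.1 (hF hA)
  have hinside : #{A ∈ F | A ⊆ Q} ≤ (s * k + k - 2).choose k := by
    rw [← hQ, ← card_powersetCard]
    exact card_le_card fun A hA =>
      mem_powersetCard.2 ⟨(mem_filter.1 hA).2, (hFk A (mem_filter.1 hA).1).2⟩
  have hrest : ∀ A ∈ {A ∈ F | ¬A ⊆ Q}, A ⊆ Icc 1 n ∧ #(A ∩ Q) = k - 1 ∧ #(A \ Q) = 1 :=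
    fun A hA => have hA := mem_filter.1 hA
      ⟨(hFk A hA.1).1, hM.card_inter_eq_and_card_sdiff_eq_one hQF hQ hA.1 (hFk A hA.1).2 hA.2⟩
  have hsk : k ≤ s * k := Nat.le_mul_of_pos_left k hs
  have houtside := card_le_of_intersecting_of_card_sdiff_eq_one (by omega : 1 ≤ k - 1)
    (by rw [hQ]; omega) hrest fun A hA B hB =>
      hM.not_disjoint hQF hQ hk hs (mem_filter.1 hA).1 (mem_filter.1 hB).1
        (hrest A hA).2.1 (hrest B hB).2.1
  rw [card_sdiff_of_subset hQn, Nat.card_Icc, hQ, Nat.add_sub_cancel,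
    show k - 1 - 1 = k - 2 by omega, show s * k + k - 2 - 1 = s * k + k - 3 by omega] at houtside
  have hpascal : (s * k + k - 2).choose k + (s * k + k - 2).choose (k - 1) =
      (s * k + k - 1).choose k := by
    obtain ⟨j, rfl⟩ : ∃ j, k = j + 1 := ⟨k - 1, by omega⟩
    rw [show s * (j + 1) + (j + 1) - 1 = s * (j + 1) + (j + 1) - 2 + 1 by omega,
      Nat.choose_succ_succ', Nat.add_sub_cancel, add_comm]
  calc #F = #{A ∈ F | A ⊆ Q} + #{A ∈ F | ¬A ⊆ Q} := (card_filter_add_card_filter_not _).symm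
    _ ≤ (s * k + k - 2).choose k + max ((s * k + k - 2).choose (k - 1))
          ((n - (s * k + k - 2)) * (s * k + k - 3).choose (k - 2)) := add_le_add hinside houtside
    _ = _ := by rw [← max_add_add_left, hpascal, Nat.mul_comm (n - _)]

end UpperBound

theorem matchingLE_powersetCard {Y : Finset ℕ} {s k : ℕ} (h : #Y < (s + 1) * k) :
    MatchingLE (Y.powersetCard k) s := by
  intro M hMY hM
  have hsum := sum_card_inter_le_card_of_pairwiseDisjoint hM Y
  rw [sum_congr rfl fun A hA => by rw [inter_eq_left.2 (mem_powersetCard.1 (hMY hA)).1,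
    (mem_powersetCard.1 (hMY hA)).2], sum_const, smul_eq_mul] at hsum
  by_contra! hlt
  have : (s + 1) * k ≤ #M * k := Nat.mul_le_mul_right k hlt
  omega

theorem hasClique_powersetCard_Icc {n q r k : ℕ} (hqr : q ≤ r) (hrn : r ≤ n) :
    HasClique n ((Icc 1 r).powersetCard k) k q :=
  ⟨Icc 1 q, Icc_subset_Icc_right (hqr.trans hrn), by rw [Nat.card_Icc, Nat.add_sub_cancel],
    powersetCard_mono (Icc_subset_Icc_right hqr)⟩

def extendedClique (q n k : ℕ) : Finset (Finset ℕ) :=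
  (Icc 1 q).powersetCard k ∪
    ((Ioc 1 q).powersetCard (k - 2) ×ˢ Ioc q n).image fun p => insert p.2 (insert 1 p.1)

section ExtendedClique

variable {q n k : ℕ}

theorem insert_insert_one_inter_Ioc {T : Finset ℕ} (hT : T ⊆ Ioc 1 q) {y : ℕ} (hy : q < y) :
    insert y (insert 1 T) ∩ Ioc 1 q = T := by
  ext a
  simp only [mem_inter, mem_insert, mem_Ioc]
  constructor
  · rintro ⟨rfl | rfl | h, h₁, h₂⟩
    · omega
    · omega
    · exact h
  · exact fun h => ⟨Or.inr (Or.inr h), mem_Ioc.1 (hT h)⟩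

theorem extendedClique_subset_powersetCard (hk : 2 ≤ k) (hq : 1 ≤ q) (hqn : q ≤ n) :
    extendedClique q n k ⊆ (Icc 1 n).powersetCard k := by
  refine union_subset (powersetCard_mono (Icc_subset_Icc_right hqn)) ?_
  simp only [image_subset_iff, mem_product, mem_powersetCard, mem_Ioc, and_imp, Prod.forall]
  intro T y hT hTk hqy hyn
  have hTq : ∀ a ∈ T, 1 < a ∧ a ≤ q := fun a ha => mem_Ioc.1 (hT ha)
  have h1T : 1 ∉ T := fun h => by have := hTq 1 h; omega
  have hyT : y ∉ insert 1 T := by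
    rw [mem_insert, not_or]
    exact ⟨by omega, fun h => by have := hTq y h; omega⟩
  refine ⟨insert_subset (mem_Icc.2 ⟨by omega, hyn⟩) (insert_subset (mem_Icc.2 ⟨le_rfl, by omega⟩)
    fun a ha => mem_Icc.2 ⟨(hTq a ha).1.le, by have := hTq a ha; omega⟩), ?_⟩
  rw [card_insert_of_notMem hyT, card_insert_of_notMem h1T, hTk]
  omega

theorem card_extendedClique (hq : 1 ≤ q) :
    #(extendedClique q n k) = q.choose k + (q - 1).choose (k - 2) * (n - q) := by
  have hdisj : Disjoint ((Icc 1 q).powersetCard k)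
      (((Ioc 1 q).powersetCard (k - 2) ×ˢ Ioc q n).image
        fun p => insert p.2 (insert 1 p.1)) := by
    simp only [disjoint_right, mem_image, mem_product, mem_Ioc, mem_powersetCard, Prod.exists]
    rintro _ ⟨T, y, ⟨-, hqy, -⟩, rfl⟩ ⟨h, -⟩
    have := mem_Icc.1 (h (mem_insert_self y _))
    omega
  have hinj : Set.InjOn (fun p : Finset ℕ × ℕ => insert p.2 (insert 1 p.1))
      ((Ioc 1 q).powersetCard (k - 2) ×ˢ Ioc q n : Finset _) := by
    rintro ⟨T, y⟩ hp ⟨T', y'⟩ hp' h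
    simp only [coe_product, Set.mem_prod, mem_coe, mem_powersetCard, mem_Ioc] at hp hp' h
    have hT := insert_insert_one_inter_Ioc hp.1.1 hp.2.1
    rw [h, insert_insert_one_inter_Ioc hp'.1.1 hp'.2.1] at hT
    have hy : y ∈ insert y' (insert 1 T') := h ▸ mem_insert_self _ _
    rw [mem_insert, mem_insert] at hy
    rcases hy with rfl | rfl | hy
    · rw [hT]
    · omega
    · have := mem_Ioc.1 (hp'.1.1 hy)
      omega
  rw [extendedClique, card_union_of_disjoint hdisj, card_image_of_injOn hinj, card_powersetCard,
    card_product, card_powersetCard, Nat.card_Icc, Nat.card_Ioc, Nat.card_Ioc, Nat.add_sub_cancel]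

theorem le_card_inter_Ioc_add_two_mul {A : Finset ℕ} (hA : A ∈ extendedClique q n k) :
    k ≤ #(A ∩ Ioc 1 q) + 2 * #(A ∩ {1}) := by
  rcases mem_union.1 hA with hA | hA
  · obtain ⟨hAq, rfl⟩ := mem_powersetCard.1 hA
    have hcover : A ⊆ A ∩ Ioc 1 q ∪ A ∩ {1} := fun a ha => by
      have := mem_Icc.1 (hAq ha)
      simp only [mem_union, mem_inter, mem_Ioc, mem_singleton, ha, true_and]
      omega
    have := (card_le_card hcover).trans (card_union_le _ _)
    omega
  · obtain ⟨⟨T, y⟩, hp, rfl⟩ := mem_image.1 hA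
    simp only [mem_product, mem_powersetCard, mem_Ioc] at hp
    rw [insert_insert_one_inter_Ioc hp.1.1 hp.2.1,
      inter_singleton_of_mem (mem_insert_of_mem (mem_insert_self 1 T)), card_singleton, hp.1.2]
    omega

theorem matchingLE_extendedClique {s : ℕ} (hq : 1 ≤ q) (h : q + 1 < (s + 1) * k) :
    MatchingLE (extendedClique q n k) s := by
  intro M hMF hM
  have hIoc := sum_card_inter_le_card_of_pairwiseDisjoint hM (Ioc 1 q)
  have hone := sum_card_inter_le_card_of_pairwiseDisjoint hM {1}
  have hsum : #M * k ≤ ∑ A ∈ M, (#(A ∩ Ioc 1 q) + 2 * #(A ∩ {1})) := by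
    rw [← smul_eq_mul, ← sum_const]
    exact sum_le_sum fun A hA => le_card_inter_Ioc_add_two_mul (hMF hA)
  rw [sum_add_distrib, ← mul_sum] at hsum
  rw [Nat.card_Ioc] at hIoc
  rw [card_singleton] at hone
  by_contra! hlt
  have : (s + 1) * k ≤ #M * k := Nat.mul_le_mul_right k hlt
  omega

theorem hasClique_extendedClique (hqn : q ≤ n) : HasClique n (extendedClique q n k) k q :=
  ⟨Icc 1 q, Icc_subset_Icc_right hqn, by rw [Nat.card_Icc, Nat.add_sub_cancel],
    subset_union_left⟩

end ExtendedClique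

theorem stmt_14 (n k s : ℕ) (hk : 2 ≤ k) (hs : 1 ≤ s) (hn : (s + 1) * k ≤ n) :
    IsGreatest
      {m : ℕ | ∃ F : Finset (Finset ℕ),
        F ⊆ (Finset.Icc 1 n).powersetCard k ∧ MatchingLE F s ∧
          HasClique n F k (s * k + k - 2) ∧ F.card = m}
      (max ((s * k + k - 1).choose k)
        ((s * k + k - 2).choose k +
          (s * k + k - 3).choose (k - 2) * (n - (s * k + k - 2)))) := by
  refine ⟨?_, fun m ⟨F, hF, hM, hQ, hm⟩ => hm ▸ card_le_of_matchingLE_of_hasClique hk hs hF hM hQ⟩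
  have hsk : k ≤ s * k := Nat.le_mul_of_pos_left k hs
  rw [add_mul, one_mul] at hn
  rcases max_choice ((s * k + k - 1).choose k)
    ((s * k + k - 2).choose k + (s * k + k - 3).choose (k - 2) * (n - (s * k + k - 2))) with h | h
  · rw [h]
    refine ⟨(Icc 1 (s * k + k - 1)).powersetCard k,
      powersetCard_mono (Icc_subset_Icc_right (by omega)),
      matchingLE_powersetCard (by rw [Nat.card_Icc, add_mul]; omega),
      hasClique_powersetCard_Icc (by omega) (by omega), ?_⟩
    rw [card_powersetCard, Nat.card_Icc, Nat.add_sub_cancel]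
  · rw [h]
    refine ⟨extendedClique (s * k + k - 2) n k,
      extendedClique_subset_powersetCard hk (by omega) (by omega),
      matchingLE_extendedClique (by omega) (by rw [add_mul]; omega),
      hasClique_extendedClique (by omega), ?_⟩
    rw [card_extendedClique (by omega), show s * k + k - 2 - 1 = s * k + k - 3 by omega]
end

section
/- Let s ≥ 2, s+1 ≤ q ≤ 2s+1 and n ≥ 2s+2. The maximum number of edges in a graph on n vertices with matching number at most s and clique number at least q equals max{ C(2s+1, 2), C(q,2) + (2s+1-q)(n-q) }. -/
open Finset

/-!
Shifting (the UV-compression replacing a vertex `j` by a smaller `i`) preserves the number of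
edges, the matching bound and the existence of a `q`-clique while lowering the total vertex
weight, so an extremal graph may be taken stable. A stable graph with no `s + 1` disjoint edges
misses one of the edges `{l + 1, 2s + 2 - l}` with `l ≤ s`, hence every edge meets `[1, l]` or
lies in `[1, 2s + 1 - l]`, and a `q`-clique forces `l ≤ 2s + 1 - q`. Such graphs have at most
`C(2s + 1 - l, 2) + l (n - 2s - 1 + l)` edges, a convex function of `l` whose values at the
endpoints `l = 0` and `l = 2s + 1 - q` are the two terms of the maximum, both attained.
-/

open UV FinsetFamily

namespace Finset

variable {α : Type*} [DecidableEq α] {i j : α} {a : Finset α}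

lemma map_swap_of_mem_of_notMem (hi : i ∈ a) (hj : j ∉ a) :
    a.map (Equiv.swap i j).toEmbedding = (a ∪ {j}) \ {i} := by
  apply coe_injective
  rw [coe_map, Equiv.coe_toEmbedding, Equiv.image_swap_of_mem_of_notMem hi hj]
  ext x
  simp

lemma map_swap_of_notMem_of_notMem (hi : i ∉ a) (hj : j ∉ a) :
    a.map (Equiv.swap i j).toEmbedding = a := by
  ext x
  simp only [mem_map_equiv, Equiv.symm_swap, Equiv.swap_apply_def]
  split_ifs with hxi hxj <;> subst_vars <;> simp [*]

end Finset

namespace UV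

variable {α : Type*} [DecidableEq α] {G : Finset (Finset α)} {i j : α}

lemma sum_compression_lt {u v : Finset α} {f : Finset α → ℕ}
    (hf : ∀ a, compress u v a ≠ a → f (compress u v a) < f a) (h : 𝓒 u v G ≠ G) :
    ∑ a ∈ 𝓒 u v G, f a < ∑ a ∈ G, f a := by
  have hmoved : {a ∈ G | compress u v a ∉ G}.Nonempty := by
    contrapose! h
    rw [compression, filter_image, h, image_empty, union_empty]
    exact filter_true_of_mem fun a ha ↦ by
      by_contra hna
      exact notMem_empty a (h ▸ mem_filter.2 ⟨ha, hna⟩)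
  rw [compression, sum_union compress_disjoint, filter_image, sum_image compress_injOn]
  conv_rhs => rw [← filter_union_filter_not_eq (fun a ↦ compress u v a ∈ G) G,
    sum_union (disjoint_filter_filter_not _ _ _)]
  refine add_lt_add_right (sum_lt_sum_of_nonempty hmoved fun a ha ↦ hf a ?_) _
  intro hfix
  exact (mem_filter.1 ha).2 (by rw [hfix]; exact (mem_filter.1 ha).1)

lemma compress_subset {S a : Finset α} (hS : j ∈ S → i ∈ S) (ha : a ⊆ S) :
    compress {i} {j} a ⊆ S := by
  unfold compress
  split_ifs with h
  · intro x hx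
    simp only [sup_eq_union, mem_sdiff, mem_union, mem_singleton] at hx
    rcases hx.1 with hx' | rfl
    · exact ha hx'
    · exact hS (ha (singleton_subset_iff.1 h.2))
  · exact ha

lemma compression_subset_powersetCard {S : Finset α} {k : ℕ} (hS : j ∈ S → i ∈ S)
    (hG : G ⊆ S.powersetCard k) : 𝓒 {i} {j} G ⊆ S.powersetCard k := by
  intro a ha
  obtain ⟨ha, -⟩ | ⟨-, b, hb, rfl⟩ := mem_compression.1 ha
  · exact hG ha
  · obtain ⟨hbS, hbk⟩ := mem_powersetCard.1 (hG hb)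
    exact mem_powersetCard.2 ⟨compress_subset hS hbS, (card_compress (by simp) b).trans hbk⟩

/-- All new edges of the compression contain `i`, so a matching in it uses at most one of them;
if it does, swapping `i` and `j` maps the whole matching into `G`. -/
lemma map_swap_mem_of_mem_compression {M : Finset (Finset α)} (hM : M ⊆ 𝓒 {i} {j} G)
    (hd : (M : Set (Finset α)).PairwiseDisjoint id) {e : Finset α} (he : e ∈ M) (heG : e ∉ G)
    {a : Finset α} (ha : a ∈ M) : a.map (Equiv.swap i j).toEmbedding ∈ G := by
  have hie : i ∈ e := singleton_subset_iff.1 (le_of_mem_compression_of_notMem (hM he) heG)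
  have hje : j ∉ e :=
    disjoint_singleton_left.1 (disjoint_of_mem_compression_of_notMem (hM he) heG)
  by_cases hia : i ∈ a
  · obtain rfl : a = e := hd.elim_finset ha he i hia hie
    rw [map_swap_of_mem_of_notMem hia hje]
    exact sup_sdiff_mem_of_mem_compression_of_notMem (hM ha) heG
  by_cases hja : j ∈ a
  · rw [Equiv.swap_comm, map_swap_of_mem_of_notMem hja hia]
    exact sup_sdiff_mem_of_mem_compression (hM ha) (singleton_subset_iff.2 hja)
      (disjoint_singleton_left.2 hia)
  · rw [map_swap_of_notMem_of_notMem hia hja]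
    by_contra haG
    exact hia (singleton_subset_iff.1 (le_of_mem_compression_of_notMem (hM ha) haG))

lemma powersetCard_compress_subset_compression {Q : Finset α} {k : ℕ}
    (hQ : Q.powersetCard k ⊆ G) : (compress {i} {j} Q).powersetCard k ⊆ 𝓒 {i} {j} G := by
  intro p hp
  obtain ⟨hpQ, hpk⟩ := mem_powersetCard.1 hp
  unfold compress at hpQ
  split_ifs at hpQ with hmoved
  · rw [disjoint_singleton_left, singleton_subset_iff] at hmoved
    have hjp : j ∉ p := fun hjp ↦ (mem_sdiff.1 (hpQ hjp)).2 (mem_singleton_self j)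
    by_cases hip : i ∈ p
    · have hb : compress {j} {i} p = (p ⊔ {j}) \ {i} :=
        compress_of_disjoint_of_le (disjoint_singleton_left.2 hjp) (singleton_subset_iff.2 hip)
      have hbp : compress {i} {j} (compress {j} {i} p) = p := by
        rw [hb, compress_of_disjoint_of_le' (disjoint_singleton_left.2 hjp)
          (singleton_subset_iff.2 hip)]
      have hbQ : compress {j} {i} p ⊆ Q := by
        intro x hx
        rw [hb] at hx
        simp only [sup_eq_union, mem_sdiff, mem_union, mem_singleton] at hx
        rcases hx with ⟨hxp | rfl, hxi⟩
        · simpa [hxi] using (mem_sdiff.1 (hpQ hxp)).1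
        · exact hmoved.2
      rw [← hbp]
      exact compress_mem_compression
        (hQ (mem_powersetCard.2 ⟨hbQ, (card_compress (by simp) p).trans hpk⟩))
    · have hpQ' : p ⊆ Q := fun x hx ↦ by
        simpa [show x ≠ i from fun h ↦ hip (h ▸ hx)] using (mem_sdiff.1 (hpQ hx)).1
      have hfix : compress {i} {j} p = p := by
        unfold compress
        rw [if_neg fun h ↦ hjp (singleton_subset_iff.1 h.2)]
      rw [← hfix]
      exact compress_mem_compression (hQ (mem_powersetCard.2 ⟨hpQ', hpk⟩))
  · have hS : j ∈ Q → i ∈ Q := by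
      rw [disjoint_singleton_left, singleton_subset_iff] at hmoved
      tauto
    have hcard : #(compress {i} {j} p) = k := (card_compress (by simp) p).trans hpk
    exact mem_compression.2 (Or.inl ⟨hQ (mem_powersetCard.2 ⟨hpQ, hpk⟩),
      hQ (mem_powersetCard.2 ⟨compress_subset hS hpQ, hcard⟩)⟩)

end UV

lemma matchingLE_compression {G : Finset (Finset ℕ)} {i j s : ℕ} (hG : MatchingLE G s) :
    MatchingLE (𝓒 {i} {j} G) s := by
  intro M hM hd
  by_cases hMG : M ⊆ G
  · exact hG M hMG hd
  obtain ⟨e, he, heG⟩ := not_subset.1 hMG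
  have hσ : Function.Injective (Finset.map (Equiv.swap i j).toEmbedding) := map_injective _
  rw [← card_image_of_injective M hσ]
  refine hG _ (fun a ha ↦ ?_) ?_
  · obtain ⟨b, hb, rfl⟩ := mem_image.1 ha
    exact map_swap_mem_of_mem_compression hM hd he heG hb
  · rw [coe_image, hσ.injOn.pairwiseDisjoint_image]
    exact fun a ha b hb hab ↦ (disjoint_map _).2 (hd ha hb hab)

lemma hasClique_compression {G : Finset (Finset ℕ)} {n k q i j : ℕ} (hi : 1 ≤ i) (hij : i < j)
    (hG : HasClique n G k q) : HasClique n (𝓒 {i} {j} G) k q := by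
  obtain ⟨Q, hQn, hQq, hQG⟩ := hG
  refine ⟨compress {i} {j} Q, compress_subset (fun hj ↦ ?_) hQn,
    (card_compress (by simp) Q).trans hQq, powersetCard_compress_subset_compression hQG⟩
  rw [mem_Icc] at hj ⊢
  omega

def familyWeight (G : Finset (Finset ℕ)) : ℕ := ∑ e ∈ G, ∑ x ∈ e, x

lemma familyWeight_compression_lt {G : Finset (Finset ℕ)} {i j : ℕ} (hij : i < j)
    (h : 𝓒 {i} {j} G ≠ G) : familyWeight (𝓒 {i} {j} G) < familyWeight G := by
  refine sum_compression_lt (fun a ha ↦ ?_) h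
  unfold compress at ha ⊢
  split_ifs at ha ⊢ with hmoved
  · rw [disjoint_singleton_left, singleton_subset_iff] at hmoved
    rw [sup_eq_union, union_comm, ← insert_eq, insert_sdiff_of_notMem _ (by simpa using hij.ne),
      sdiff_singleton_eq_erase, sum_insert fun h ↦ hmoved.1 (mem_of_mem_erase h),
      ← add_sum_erase _ _ hmoved.2]
    omega
  · exact absurd rfl ha

def IsStable (G : Finset (Finset ℕ)) : Prop :=
  ∀ ⦃i j : ℕ⦄, 1 ≤ i → i < j → IsCompressed {i} {j} G

lemma exists_isStable {n s q k : ℕ} (G : Finset (Finset ℕ))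
    (hG : G ⊆ (Icc 1 n).powersetCard k) (hM : MatchingLE G s) (hQ : HasClique n G k q) :
    ∃ H ⊆ (Icc 1 n).powersetCard k, MatchingLE H s ∧ HasClique n H k q ∧ #H = #G ∧
      IsStable H := by
  induction hw : familyWeight G using Nat.strong_induction_on generalizing G with
  | _ w ih =>
  by_cases hst : IsStable G
  · exact ⟨G, hG, hM, hQ, rfl, hst⟩
  obtain ⟨i, j, hi, hij, hmoved⟩ : ∃ i j, 1 ≤ i ∧ i < j ∧ 𝓒 {i} {j} G ≠ G := by
    simpa [IsStable, IsCompressed] using hst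
  have hsub : 𝓒 {i} {j} G ⊆ (Icc 1 n).powersetCard k :=
    compression_subset_powersetCard (fun hj ↦ by rw [mem_Icc] at hj ⊢; omega) hG
  obtain ⟨H, hH, hHM, hHQ, hHG, hHst⟩ := ih _ (hw ▸ familyWeight_compression_lt hij hmoved) _
    hsub (matchingLE_compression hM) (hasClique_compression hi hij hQ) rfl
  exact ⟨H, hH, hHM, hHQ, hHG.trans (card_compression _ _ _), hHst⟩

namespace IsStable

variable {G : Finset (Finset ℕ)}

lemma sup_sdiff_mem (hG : IsStable G) {e : Finset ℕ} {i j : ℕ} (he : e ∈ G) (hi : 1 ≤ i)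
    (hij : i < j) (hje : j ∈ e) (hie : i ∉ e) : (e ⊔ {i}) \ {j} ∈ G := by
  have he' : e ∈ 𝓒 {i} {j} G := by rwa [(hG hi hij).eq]
  exact sup_sdiff_mem_of_mem_compression he' (singleton_subset_iff.2 hje)
    (disjoint_singleton_left.2 hie)

lemma pair_mem_of_le (hG : IsStable G) {a b a' b' : ℕ} (hab : {a, b} ∈ G) (h : a < b)
    (ha' : 1 ≤ a') (ha : a' ≤ a) (hb : b' ≤ b) (h' : a' < b') : {a', b'} ∈ G := by
  have hb_mem : ({a', b} : Finset ℕ) ∈ G := by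
    rcases ha.eq_or_lt with rfl | ha
    · exact hab
    · convert hG.sup_sdiff_mem hab ha' ha (by simp) (by simp; omega) using 1
      ext x; simp; omega
  rcases hb.eq_or_lt with rfl | hb
  · exact hb_mem
  · convert hG.sup_sdiff_mem hb_mem (by omega) hb (by simp) (by simp; omega) using 1
    ext x; simp; omega

lemma le_or_le_of_pair_notMem (hG : IsStable G) {l m a b : ℕ} (hlm : l < m)
    (hmiss : {l + 1, m + 1} ∉ G) (hab : {a, b} ∈ G) (h : a < b) :
    a ≤ l ∨ b ≤ m := by
  by_contra! hc
  exact hmiss (hG.pair_mem_of_le hab h (by omega) (by omega) (by omega) (by omega))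

end IsStable

lemma exists_pair_notMem_of_matchingLE {G : Finset (Finset ℕ)} {s : ℕ} (hM : MatchingLE G s) :
    ∃ l ≤ s, ({l + 1, 2 * s + 2 - l} : Finset ℕ) ∉ G := by
  by_contra! hall
  set f : ℕ → Finset ℕ := fun l ↦ {l + 1, 2 * s + 2 - l}
  have hinj : Set.InjOn f (range (s + 1)) := by
    intro l₁ hl₁ l₂ hl₂ heq
    have : l₁ + 1 ∈ f l₂ := heq ▸ mem_insert_self _ _
    simp only [coe_range, Set.mem_Iio, f, mem_insert, mem_singleton] at hl₁ hl₂ this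
    omega
  have hd : ((range (s + 1)).image f : Set (Finset ℕ)).PairwiseDisjoint id := by
    rw [coe_image, hinj.pairwiseDisjoint_image]
    intro l₁ hl₁ l₂ hl₂ hne
    simp only [coe_range, Set.mem_Iio] at hl₁ hl₂
    simp only [Function.onFun, Function.comp_apply, id, f, disjoint_insert_left,
      disjoint_insert_right, disjoint_singleton, mem_insert, mem_singleton]
    omega
  have := hM _ (image_subset_iff.2 fun l hl ↦ hall l (by simpa [Nat.lt_succ_iff] using hl)) hd
  rw [card_image_of_injOn hinj, card_range] at this
  omega

lemma exists_eq_pair_of_mem_powersetCard_two {n : ℕ} {e : Finset ℕ}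
    (he : e ∈ (Icc 1 n).powersetCard 2) :
    ∃ a b, 1 ≤ a ∧ a < b ∧ b ≤ n ∧ e = {a, b} := by
  obtain ⟨he, hcard⟩ := mem_powersetCard.1 he
  obtain ⟨x, y, hxy, rfl⟩ := card_eq_two.1 hcard
  have hx := mem_Icc.1 (he (mem_insert_self x _))
  have hy := mem_Icc.1 (he (mem_insert_of_mem (mem_singleton_self y)))
  rcases hxy.lt_or_gt with h | h
  · exact ⟨x, y, hx.1, h, hy.2, rfl⟩
  · exact ⟨y, x, hy.1, h, hx.2, pair_comm x y⟩

lemma pair_mem_powersetCard_two {S : Finset ℕ} {a b : ℕ} (ha : a ∈ S) (hb : b ∈ S)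
    (h : a ≠ b) : {a, b} ∈ S.powersetCard 2 :=
  mem_powersetCard.2 ⟨insert_subset ha (singleton_subset_iff.2 hb), card_pair h⟩

lemma exists_mem_lt_mem {Q : Finset ℕ} {l m : ℕ} (hQ : ∀ x ∈ Q, 1 ≤ x) (hl : l + 2 ≤ #Q)
    (hm : m + 1 ≤ #Q) : ∃ a ∈ Q, ∃ b ∈ Q, l < a ∧ a < b ∧ m < b := by
  have hsmall : ∀ x, #{y ∈ Q | y ≤ x} ≤ x := fun x ↦
    (card_le_card fun y hy ↦ by
      rw [mem_filter] at hy; exact mem_Icc.2 ⟨hQ y hy.1, hy.2⟩).trans (Nat.card_Icc 1 x).le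
  have hne : Q.Nonempty := card_pos.1 (by omega)
  set b := Q.max' hne
  have hmb : m < b := by
    by_contra! hbm
    have := hsmall m
    rw [filter_true_of_mem fun y hy ↦ (Q.le_max' y hy).trans hbm] at this
    omega
  have hlarge : 1 < #{y ∈ Q | l < y} := by
    have hsplit := card_filter_add_card_filter_not (s := Q) (p := fun y ↦ l < y)
    simp only [not_lt] at hsplit
    have := hsmall l
    omega
  obtain ⟨a, ha, hab⟩ := exists_mem_ne hlarge b
  rw [mem_filter] at ha
  exact ⟨a, ha.1, b, Q.max'_mem hne, ha.2, (Q.le_max' a ha.1).lt_of_ne hab, hmb⟩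

def extremalGraph (n m l : ℕ) : Finset (Finset ℕ) :=
  (Icc 1 m).powersetCard 2 ∪ (Icc 1 l ×ˢ Icc (m + 1) n).image fun p ↦ {p.1, p.2}

section extremalGraph

variable {n m l : ℕ}

lemma mem_extremalGraph {e : Finset ℕ} :
    e ∈ extremalGraph n m l ↔
      e ∈ (Icc 1 m).powersetCard 2 ∨
        ∃ a b, 1 ≤ a ∧ a ≤ l ∧ m < b ∧ b ≤ n ∧ e = {a, b} := by
  simp only [extremalGraph, mem_union, mem_image, mem_product, mem_Icc, Prod.exists,
    Order.add_one_le_iff]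
  grind

lemma extremalGraph_subset (hlm : l ≤ m) (hmn : m ≤ n) :
    extremalGraph n m l ⊆ (Icc 1 n).powersetCard 2 := by
  intro e he
  rcases mem_extremalGraph.1 he with he | ⟨a, b, ha, hal, hmb, hbn, rfl⟩
  · exact powersetCard_mono (Icc_subset_Icc le_rfl hmn) he
  · exact pair_mem_powersetCard_two (mem_Icc.2 ⟨ha, by omega⟩) (mem_Icc.2 ⟨by omega, hbn⟩)
      (by omega)

lemma card_extremalGraph (hlm : l ≤ m) : #(extremalGraph n m l) = m.choose 2 + l * (n - m) := by
  rw [extremalGraph, card_union_of_disjoint, card_powersetCard, Nat.card_Icc, card_image_of_injOn,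
    card_product, Nat.card_Icc, Nat.card_Icc]
  · simp
  · rintro ⟨a, b⟩ hab ⟨c, d⟩ hcd heq
    simp only [coe_product, Set.mem_prod, mem_coe, mem_Icc] at hab hcd heq
    have ha : a ∈ ({c, d} : Finset ℕ) := heq ▸ mem_insert_self a _
    have hb : b ∈ ({c, d} : Finset ℕ) := heq ▸ mem_insert_of_mem (mem_singleton_self b)
    simp only [mem_insert, mem_singleton] at ha hb
    ext <;> simp <;> omega
  · rw [disjoint_right]
    rintro _ he hin
    obtain ⟨⟨a, b⟩, hab, rfl⟩ := mem_image.1 he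
    simp only [mem_product, mem_Icc] at hab
    have := mem_Icc.1 ((mem_powersetCard.1 hin).1 (mem_insert_of_mem (mem_singleton_self b)))
    omega

lemma hasClique_extremalGraph {q : ℕ} (hqm : q ≤ m) (hmn : m ≤ n) :
    HasClique n (extremalGraph n m l) 2 q :=
  ⟨Icc 1 q, Icc_subset_Icc le_rfl (hqm.trans hmn), by simp,
    (powersetCard_mono (Icc_subset_Icc le_rfl hqm)).trans subset_union_left⟩

lemma matchingLE_extremalGraph {s : ℕ} (hlm : l ≤ m) (hs : m + l ≤ 2 * s + 1) :
    MatchingLE (extremalGraph n m l) s := by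
  intro M hM hd
  have hmeets : ∀ e ∈ M, 2 ≤ #(Icc 1 m ∩ e) + #(Icc 1 l ∩ e) := by
    intro e he
    rcases mem_extremalGraph.1 (hM he) with he | ⟨a, b, ha, hal, -, -, rfl⟩
    · rw [inter_eq_right.2 (mem_powersetCard.1 he).1, (mem_powersetCard.1 he).2]
      omega
    · have hm : 0 < #(Icc 1 m ∩ {a, b}) :=
        card_pos.2 ⟨a, mem_inter.2 ⟨mem_Icc.2 ⟨ha, by omega⟩, mem_insert_self a _⟩⟩
      have hl : 0 < #(Icc 1 l ∩ {a, b}) :=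
        card_pos.2 ⟨a, mem_inter.2 ⟨mem_Icc.2 ⟨ha, hal⟩, mem_insert_self a _⟩⟩
      omega
  have hcover : ∀ (S : Finset ℕ), ∑ e ∈ M, #(S ∩ e) ≤ #S := fun S ↦ by
    simpa using sum_card_inter_le (s := S) (B := M) (n := 1) fun x _ ↦
      card_le_one.2 fun e he f hf ↦
        hd.elim_finset (mem_filter.1 he).1 (mem_filter.1 hf).1 x (mem_filter.1 he).2
          (mem_filter.1 hf).2
  have htwice := sum_le_sum hmeets
  rw [sum_const, smul_eq_mul, sum_add_distrib] at htwice
  have hm := hcover (Icc 1 m)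
  have hl := hcover (Icc 1 l)
  rw [Nat.card_Icc, Nat.add_sub_cancel] at hm hl
  omega

lemma subset_extremalGraph {G : Finset (Finset ℕ)} (hG : G ⊆ (Icc 1 n).powersetCard 2)
    (h : ∀ a b, {a, b} ∈ G → a < b → a ≤ l ∨ b ≤ m) : G ⊆ extremalGraph n m l := by
  intro e he
  obtain ⟨a, b, ha, hab, hbn, rfl⟩ := exists_eq_pair_of_mem_powersetCard_two (hG he)
  rw [mem_extremalGraph]
  rcases Nat.lt_or_ge m b with hmb | hbm
  · exact Or.inr ⟨a, b, ha, (h a b he hab).resolve_right (by omega), hmb, hbn, rfl⟩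
  · exact Or.inl (pair_mem_powersetCard_two (mem_Icc.2 ⟨ha, by omega⟩)
      (mem_Icc.2 ⟨by omega, hbm⟩) hab.ne)

end extremalGraph

lemma IsStable.exists_subset_extremalGraph {G : Finset (Finset ℕ)} {n s q : ℕ}
    (hG : IsStable G) (hGn : G ⊆ (Icc 1 n).powersetCard 2) (hM : MatchingLE G s)
    (hQ : HasClique n G 2 q) :
    ∃ l ≤ s, q ≤ 2 * s + 1 - l ∧ G ⊆ extremalGraph n (2 * s + 1 - l) l := by
  obtain ⟨l, hls, hmiss⟩ := exists_pair_notMem_of_matchingLE hM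
  rw [show 2 * s + 2 - l = 2 * s + 1 - l + 1 by omega] at hmiss
  have hedge : ∀ a b, {a, b} ∈ G → a < b → a ≤ l ∨ b ≤ 2 * s + 1 - l :=
    fun a b hab h ↦ hG.le_or_le_of_pair_notMem (by omega) hmiss hab h
  refine ⟨l, hls, ?_, subset_extremalGraph hGn hedge⟩
  obtain ⟨Q, hQn, hQq, hQG⟩ := hQ
  by_contra! hq
  obtain ⟨a, ha, b, hb, hla, hab, hmb⟩ :=
    exists_mem_lt_mem (l := l) (m := 2 * s + 1 - l) (fun x hx ↦ (mem_Icc.1 (hQn hx)).1)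
      (by omega) (by omega)
  have := hedge a b (hQG (pair_mem_powersetCard_two ha hb hab.ne)) hab
  omega

lemma choose_two_add_mul_le_max {l t m n : ℕ} (hlt : l ≤ t) (htm : t ≤ m) (hmn : m ≤ n) :
    (m - l).choose 2 + l * (n - (m - l)) ≤
      max (m.choose 2) ((m - t).choose 2 + t * (n - (m - t))) := by
  set g : ℕ → ℕ := fun x ↦ (m - x).choose 2 + x * (n - (m - x)) with hg
  have hconvex : t * g l ≤ (t - l) * g 0 + l * g t := by
    suffices ((t * g l : ℕ) : ℚ) ≤ ((t - l) * g 0 + l * g t : ℕ) by exact_mod_cast this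
    simp only [hg, Nat.sub_zero, zero_mul, add_zero]
    push_cast [Nat.cast_choose_two, Nat.cast_sub hlt, Nat.cast_sub htm,
      Nat.cast_sub (hlt.trans htm), Nat.cast_sub hmn, Nat.cast_sub ((Nat.sub_le m l).trans hmn),
      Nat.cast_sub ((Nat.sub_le m t).trans hmn)]
    -- `g` is quadratic with leading coefficient `3 / 2`, so the right side minus the left side
    -- is `3 t l (t - l) / 2`.
    have hdefect : (0 : ℚ) ≤ t * l * (t - l) :=
      mul_nonneg (by positivity) (sub_nonneg.2 (Nat.cast_le.2 hlt))
    nlinarith [hdefect]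
  suffices g l ≤ max (g 0) (g t) by simpa only [hg, Nat.sub_zero, zero_mul, add_zero] using this
  rcases Nat.eq_zero_or_pos t with rfl | ht
  · obtain rfl : l = 0 := by omega
    exact le_max_left _ _
  · refine Nat.le_of_mul_le_mul_left (hconvex.trans ?_) ht
    calc (t - l) * g 0 + l * g t ≤ (t - l) * max (g 0) (g t) + l * max (g 0) (g t) := by
          gcongr <;> simp
      _ = t * max (g 0) (g t) := by rw [← add_mul, Nat.sub_add_cancel hlt]

theorem stmt_15_general (n s q : ℕ) (hq1 : s + 1 ≤ q) (hq2 : q ≤ 2 * s + 1)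
    (hn : 2 * s + 2 ≤ n) :
    IsGreatest
      {m : ℕ | ∃ G : Finset (Finset ℕ),
        G ⊆ (Finset.Icc 1 n).powersetCard 2 ∧ MatchingLE G s ∧
          HasClique n G 2 q ∧ G.card = m}
      (max ((2 * s + 1).choose 2) (q.choose 2 + (2 * s + 1 - q) * (n - q))) := by
  refine ⟨?_, ?_⟩
  · rcases max_choice ((2 * s + 1).choose 2) (q.choose 2 + (2 * s + 1 - q) * (n - q))
      with h | h <;> rw [h]
    · exact ⟨extremalGraph n (2 * s + 1) 0, extremalGraph_subset (by omega) (by omega),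
        matchingLE_extremalGraph (by omega) (by omega), hasClique_extremalGraph hq2 (by omega),
        by simp [card_extremalGraph]⟩
    · exact ⟨extremalGraph n q (2 * s + 1 - q), extremalGraph_subset (by omega) (by omega),
        matchingLE_extremalGraph (by omega) (by omega), hasClique_extremalGraph le_rfl (by omega),
        card_extremalGraph (by omega)⟩
  · rintro _ ⟨G, hG, hM, hQ, rfl⟩
    obtain ⟨H, hH, hHM, hHQ, hHG, hst⟩ := exists_isStable G hG hM hQ
    obtain ⟨l, hls, hlq, hHl⟩ := hst.exists_subset_extremalGraph hH hHM hHQ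
    have hbound := choose_two_add_mul_le_max (l := l) (t := 2 * s + 1 - q) (m := 2 * s + 1)
      (n := n) (by omega) (by omega) (by omega)
    rw [show 2 * s + 1 - (2 * s + 1 - q) = q by omega] at hbound
    calc #G = #H := hHG.symm
      _ ≤ #(extremalGraph n (2 * s + 1 - l) l) := card_le_card hHl
      _ = (2 * s + 1 - l).choose 2 + l * (n - (2 * s + 1 - l)) := card_extremalGraph (by omega)
      _ ≤ _ := hbound

theorem stmt_15 (n s q : ℕ) (hs : 2 ≤ s) (hq1 : s + 1 ≤ q) (hq2 : q ≤ 2 * s + 1)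
    (hn : 2 * s + 2 ≤ n) :
    IsGreatest
      {m : ℕ | ∃ G : Finset (Finset ℕ),
        G ⊆ (Finset.Icc 1 n).powersetCard 2 ∧ MatchingLE G s ∧
          HasClique n G 2 q ∧ G.card = m}
      (max ((2 * s + 1).choose 2) (q.choose 2 + (2 * s + 1 - q) * (n - q))) :=
  stmt_15_general n s q hq1 hq2 hn
end

section
/- Let n_2 ≥ 4k·n_1 and 1 ≤ l < l' ≤ k-1 with l, l' < k and l, l' ≤ n_1, k - l, k - l' ≤ n_2. Then 1/(l!·(n_1-l)!·(k-l)!·(n_2-k+l)!) > 1/(l'!·(n_1-l')!·(k-l')!·(n_2-k+l')!). -/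
/-!
Write `g i = i! (n₁ - i)! (k - i)! (n₂ + i - k)!`, so the quantities compared are `1 / g l` and
`1 / g l'`. Passing from `i` to `i + 1` multiplies `g` by `(i + 1)(n₂ + i + 1 - k) / ((n₁ - i)(k - i))`,
and this ratio exceeds `1` as soon as `k (n₁ + 1) ≤ n₂`, because `(n₁ - i)(k - i) ≤ k n₁`.
Hence `g` is strictly increasing on `[0, min n₁ k]`.
-/

open Nat

def factorialProduct (n₁ n₂ k i : ℕ) : ℕ :=
  i ! * (n₁ - i)! * (k - i)! * (n₂ + i - k)!

theorem factorialProduct_pos (n₁ n₂ k i : ℕ) : 0 < factorialProduct n₁ n₂ k i := by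
  unfold factorialProduct
  positivity

theorem factorialProduct_add_one_mul {n₁ n₂ k i : ℕ} (hn₁ : i + 1 ≤ n₁) (hk : i + 1 ≤ k)
    (hn₂ : k ≤ n₂ + i) :
    factorialProduct n₁ n₂ k (i + 1) * ((n₁ - i) * (k - i)) =
      factorialProduct n₁ n₂ k i * ((i + 1) * (n₂ + i + 1 - k)) := by
  unfold factorialProduct
  have e₁ : (n₁ - i)! = (n₁ - i) * (n₁ - (i + 1))! := by
    rw [← Nat.sub_sub, Nat.mul_factorial_pred (by omega)]
  have e₂ : (k - i)! = (k - i) * (k - (i + 1))! := by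
    rw [← Nat.sub_sub, Nat.mul_factorial_pred (by omega)]
  have e₃ : (n₂ + (i + 1) - k)! = (n₂ + i + 1 - k) * (n₂ + i - k)! := by
    rw [← add_assoc, ← Nat.mul_factorial_pred (n := n₂ + i + 1 - k) (by omega),
      show n₂ + i + 1 - k - 1 = n₂ + i - k by omega]
  rw [e₁, e₂, e₃, factorial_succ]
  ring

theorem factorialProduct_lt_add_one {n₁ n₂ k i : ℕ} (h : k * (n₁ + 1) ≤ n₂) (hn₁ : i + 1 ≤ n₁)
    (hk : i + 1 ≤ k) : factorialProduct n₁ n₂ k i < factorialProduct n₁ n₂ k (i + 1) := by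
  have hratio : (n₁ - i) * (k - i) < (i + 1) * (n₂ + i + 1 - k) :=
    calc (n₁ - i) * (k - i) ≤ k * n₁ := by
          rw [mul_comm]; exact Nat.mul_le_mul (by omega) (by omega)
      _ < n₂ + i + 1 - k := by rw [mul_add_one] at h; omega
      _ ≤ (i + 1) * (n₂ + i + 1 - k) := Nat.le_mul_of_pos_left _ (by omega)
  refine Nat.lt_of_mul_lt_mul_right (a := (n₁ - i) * (k - i)) ?_
  rw [factorialProduct_add_one_mul hn₁ hk (by nlinarith)]
  exact Nat.mul_lt_mul_of_pos_left hratio (factorialProduct_pos n₁ n₂ k i)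

theorem factorialProduct_strictMonoOn {n₁ n₂ k : ℕ} (h : k * (n₁ + 1) ≤ n₂) :
    StrictMonoOn (factorialProduct n₁ n₂ k) (Set.Iic (min n₁ k)) :=
  strictMonoOn_Iic_of_lt_succ fun i hi ↦ by
    rw [Order.succ_eq_add_one]
    exact factorialProduct_lt_add_one h (by omega) (by omega)

theorem stmt_16_general (n1 n2 k l l' : ℕ)
    (hbig : 4 * k * n1 ≤ n2)
    (hll' : l < l')
    (hl'k2 : l' < k) (hl'n1 : l' ≤ n1) :
    (1 : ℝ) / ((Nat.factorial l : ℝ) * (Nat.factorial (n1 - l)) *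
        (Nat.factorial (k - l)) * (Nat.factorial (n2 + l - k))) >
      1 / ((Nat.factorial l' : ℝ) * (Nat.factorial (n1 - l')) *
        (Nat.factorial (k - l')) * (Nat.factorial (n2 + l' - k))) := by
  have h : k * (n1 + 1) ≤ n2 := by nlinarith
  have hlt : factorialProduct n1 n2 k l < factorialProduct n1 n2 k l' :=
    factorialProduct_strictMonoOn h (Set.mem_Iic.2 (le_min (by omega) (by omega)))
      (Set.mem_Iic.2 (le_min hl'n1 hl'k2.le)) hll'
  have hltℝ : ((factorialProduct n1 n2 k l : ℕ) : ℝ) < factorialProduct n1 n2 k l' := by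
    exact_mod_cast hlt
  simp only [factorialProduct, Nat.cast_mul] at hltℝ
  exact one_div_lt_one_div_of_lt (by positivity) hltℝ

theorem stmt_16 (n1 n2 k l l' : ℕ)
    (hbig : 4 * k * n1 ≤ n2)
    (hl1 : 1 ≤ l) (hll' : l < l') (hl'k : l' ≤ k - 1)
    (hlk : l < k) (hl'k2 : l' < k) (hln1 : l ≤ n1) (hl'n1 : l' ≤ n1)
    (hkl : k - l ≤ n2) (hkl' : k - l' ≤ n2) :
    (1 : ℝ) / ((Nat.factorial l : ℝ) * (Nat.factorial (n1 - l)) *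
        (Nat.factorial (k - l)) * (Nat.factorial (n2 + l - k))) >
      1 / ((Nat.factorial l' : ℝ) * (Nat.factorial (n1 - l')) *
        (Nat.factorial (k - l')) * (Nat.factorial (n2 + l' - k))) :=
  stmt_16_general n1 n2 k l l' hbig hll' hl'k2 hl'n1
end

section
/- Let F be a shifted family of k-subsets of {1,...,n} of maximum size subject to having matching number exactly s and clique number exactly q. If F is reducible, i.e. the subfamily F(1̄) of sets avoiding the element 1 has matching number s-1, then m*(n,q,k,s) = C(n-1, k-1) + m*(n-1, q-1, k, s-1). -/
open Finset

/-- The matching number of `F` equals `s`. -/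
def MatchingEq (F : Finset (Finset ℕ)) (s : ℕ) : Prop :=
  MatchingLE F s ∧ HasMatching F s

/-- The clique number of `F` equals `q`. -/
def CliqueEq (n : ℕ) (F : Finset (Finset ℕ)) (k q : ℕ) : Prop :=
  HasClique n F k q ∧ ¬ HasClique n F k (q + 1)

/-- `m*(n,q,k,s)`: maximum size of a shifted `k`-graph on `{1,…,n}` with
matching number `s` and clique number `q`. -/
noncomputable def mstar (n q k s : ℕ) : ℕ :=
  sSup {m : ℕ | ∃ F : Finset (Finset ℕ),
    F ⊆ (Finset.Icc 1 n).powersetCard k ∧ IsShifted n F ∧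
      MatchingEq F s ∧ CliqueEq n F k q ∧ F.card = m}

/-!
Split `F` according to whether a set contains `1`. The sets through `1` are at most
`C(n-1, k-1)` many; the sets avoiding `1`, shifted down by one, form a shifted family on
`{1,…,n-1}` with matching number `s-1` (reducibility) and clique number `q-1`. Its clique
number cannot reach `q`: a `q`-clique `Q` would make `{1} ∪ (Q + 1)` a `(q+1)`-clique of `F`,
because shiftedness puts every `k`-subset of it through `1` into `F` (here `k ≤ q`).
This gives `m*(n,q,k,s) ≤ C(n-1,k-1) + m*(n-1,q-1,k,s-1)`.

Conversely, shift an extremal family for `m*(n-1,q-1,k,s-1)` up by one and add all `k`-sets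
through `1`. The result is shifted, its clique number grows by exactly one, and its matching
number by exactly one: at most one edge of a matching contains `1`, and one such edge can be
added to a maximum matching since `s k ≤ n`.
-/

theorem List.Sublist.forall₂_cons_le {α : Type*} [Preorder α] {l m : List α} {x : α}
    (h : l.Sublist m) (hlen : m.length = l.length + 1) (hm : m.Pairwise (· ≤ ·))
    (hx : ∀ y ∈ m, x ≤ y) : List.Forall₂ (· ≤ ·) (x :: l) m := by
  induction m generalizing l x with
  | nil => simp at hlen
  | cons a m ih =>
    cases h with
    | cons _ h =>
      obtain rfl : l = m := h.eq_of_length (by simpa using hlen.symm)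
      exact .cons (hx a (by simp)) (List.forall₂_same.mpr fun y _ => le_rfl)
    | cons_cons _ h =>
      exact .cons (hx a (by simp)) (ih h (by simpa using hlen) hm.of_cons
        fun y hy => List.rel_of_pairwise_cons hm hy)

theorem shiftLE.card_eq {A B : Finset ℕ} (h : shiftLE A B) : A.card = B.card := by
  simpa using h.length_eq

theorem exists_le_of_shiftLE {A B : Finset ℕ} (h : shiftLE A B) {b : ℕ} (hb : b ∈ B) :
    ∃ a ∈ A, a ≤ b := by
  unfold shiftLE at h
  have hb : b ∈ B.sort (· ≤ ·) := (mem_sort _).mpr hb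
  have hB := pairwise_sort B (· ≤ ·)
  have hA : ∀ a ∈ A.sort (· ≤ ·), a ∈ A := fun a => (mem_sort _).mp
  generalize B.sort (· ≤ ·) = lB at h hb hB
  generalize A.sort (· ≤ ·) = lA at h hA
  cases h with
  | nil => simp at hb
  | @cons a b₀ _ _ hab _ =>
    refine ⟨a, hA a (by simp), hab.trans ?_⟩
    rcases List.mem_cons.mp hb with rfl | hb
    · exact le_rfl
    · exact List.rel_of_pairwise_cons hB hb

theorem shiftLE_insert_of_subset {S T : Finset ℕ} {y : ℕ} (hST : S ⊆ T)
    (hcard : T.card = S.card + 1) (hy : ∀ x ∈ T, y ≤ x) (hyS : y ∉ S) :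
    shiftLE (insert y S) T := by
  have hsub : (S.sort (· ≤ ·)).Sublist (T.sort (· ≤ ·)) :=
    List.sublist_of_subperm_of_pairwise
      (List.subperm_of_subset (sort_nodup _ _) fun x hx => by simpa using hST (by simpa using hx))
      (pairwise_sort _ _) (pairwise_sort _ _)
  unfold shiftLE
  rw [sort_insert _ (fun x hx => hy x (hST hx)) hyS]
  exact hsub.forall₂_cons_le (by simp [hcard]) (pairwise_sort _ _)
    fun x hx => hy x ((mem_sort _).mp hx)

theorem IsShifted.insert_one_mem {n : ℕ} {F : Finset (Finset ℕ)} (hF : IsShifted n F)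
    {S T : Finset ℕ} (hT : T ∈ F) (hTn : T ⊆ Icc 1 n) (hST : S ⊆ T)
    (hcard : T.card = S.card + 1) (h1 : 1 ∉ T) : insert 1 S ∈ F := by
  have hT1 : ∀ x ∈ T, 1 ≤ x := fun x hx => (mem_Icc.mp (hTn hx)).1
  obtain ⟨x, hx⟩ : T.Nonempty := card_pos.mp (by omega)
  have h1n : 1 ∈ Icc 1 n := mem_Icc.mpr ⟨le_rfl, (hT1 x hx).trans (mem_Icc.mp (hTn hx)).2⟩
  exact hF T hT _ (insert_subset h1n (hST.trans hTn))
    (shiftLE_insert_of_subset hST hcard hT1 fun h => h1 (hST h))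

theorem IsShifted.mem_of_one_mem {m k : ℕ} {F : Finset (Finset ℕ)} (hF : IsShifted (m + 1) F)
    {R S : Finset ℕ} (hR : R ⊆ (Icc 1 (m + 1)).erase 1) (hkR : k ≤ R.card)
    (hRF : R.powersetCard k ⊆ F) (hS : S ∈ (insert 1 R).powersetCard k) (hS1 : 1 ∈ S) :
    S ∈ F := by
  rw [mem_powersetCard, subset_insert_iff] at hS
  obtain ⟨T, hST, hTR, hTc⟩ :=
    exists_subsuperset_card_eq hS.1 (card_erase_le.trans hS.2.le) hkR
  have hcard : T.card = (S.erase 1).card + 1 := by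
    rw [card_erase_of_mem hS1]; have := card_pos.mpr ⟨1, hS1⟩; omega
  rw [← insert_erase hS1]
  exact hF.insert_one_mem (hRF (mem_powersetCard.mpr ⟨hTR, hTc⟩))
    (hTR.trans (hR.trans (erase_subset _ _))) hST hcard fun h => by simpa using hR (hTR h)

theorem le_of_not_hasClique_succ {n k q : ℕ} {F : Finset (Finset ℕ)}
    (hF : F ⊆ (Icc 1 n).powersetCard k) (hne : F.Nonempty) (h : ¬HasClique n F k (q + 1)) :
    k ≤ q := by
  by_contra! hqk
  obtain ⟨A, hA⟩ := hne
  obtain ⟨hAn, hAk⟩ := mem_powersetCard.mp (hF hA)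
  obtain ⟨Q, hQA, hQc⟩ := exists_subset_card_eq (show q + 1 ≤ A.card by omega)
  refine h ⟨Q, hQA.trans hAn, hQc, fun S hS => ?_⟩
  obtain ⟨hSQ, hSk⟩ := mem_powersetCard.mp hS
  obtain rfl : S = Q := eq_of_subset_of_card_le hSQ (by omega)
  rwa [eq_of_subset_of_card_le hQA (by omega)]

theorem HasMatching.mul_le {n k s : ℕ} {F : Finset (Finset ℕ)}
    (hF : F ⊆ (Icc 1 n).powersetCard k) (h : HasMatching F s) : s * k ≤ n := by
  obtain ⟨M, hMF, hMd, rfl⟩ := h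
  have hMk (A) (hA : A ∈ M) := mem_powersetCard.mp (hF (hMF hA))
  calc M.card * k = (M.biUnion id).card := by
        rw [card_biUnion hMd]; exact (sum_const_nat fun A hA => (hMk A hA).2).symm
    _ ≤ (Icc 1 n).card := card_le_card (biUnion_subset.mpr fun A hA => (hMk A hA).1)
    _ = n := by simp

theorem MatchingLE.succ_of_forall_notMem {G H : Finset (Finset ℕ)} {t x : ℕ}
    (hG : MatchingLE G t) (hHG : ∀ A ∈ H, x ∉ A → A ∈ G) : MatchingLE H (t + 1) := by
  intro M hM hMd
  have hx : (M.filter (x ∈ ·)).card ≤ 1 := by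
    refine card_le_one.mpr fun A hA B hB => ?_
    rw [mem_filter] at hA hB
    by_contra hAB
    exact disjoint_left.mp (hMd hA.1 hB.1 hAB) hA.2 hB.2
  have hnx : (M.filter (x ∉ ·)).card ≤ t :=
    hG _ (fun A hA => hHG A (hM (mem_filter.mp hA).1) (mem_filter.mp hA).2)
      (hMd.subset (coe_subset.mpr (filter_subset _ _)))
  have := card_filter_add_card_filter_not (s := M) (x ∈ ·)
  omega

theorem exists_disjoint_of_card_le {M : Finset (Finset ℕ)} {V : Finset ℕ} {k x : ℕ}
    (hMd : (M : Set (Finset ℕ)).PairwiseDisjoint id) (hMV : ∀ A ∈ M, A ⊆ V ∧ A.card = k)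
    (hk : 1 ≤ k) (hxV : x ∈ V) (hxM : ∀ A ∈ M, x ∉ A) (hcard : (M.card + 1) * k ≤ V.card) :
    ∃ S ⊆ V, x ∈ S ∧ S.card = k ∧ ∀ A ∈ M, Disjoint S A := by
  set U := M.biUnion id
  have hU : U.card = M.card * k := by
    rw [card_biUnion hMd]; exact sum_const_nat fun A hA => (hMV A hA).2
  have hUV : U ⊆ V := biUnion_subset.mpr fun A hA => (hMV A hA).1
  have hxU : {x} ⊆ V \ U := by simpa [U] using ⟨hxV, hxM⟩
  obtain ⟨S, hxS, hSVU, hS⟩ := exists_subsuperset_card_eq hxU (by simpa using hk)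
    (by rw [card_sdiff_of_subset hUV, hU]; rw [add_one_mul] at hcard; omega)
  refine ⟨S, hSVU.trans sdiff_subset, singleton_subset_iff.mp hxS, hS, fun A hA => ?_⟩
  exact disjoint_left.mpr fun y hyS hyA =>
    (mem_sdiff.mp (hSVU hyS)).2 (mem_biUnion.mpr ⟨A, hA, hyA⟩)

theorem card_filter_one_mem_powersetCard {m k : ℕ} (hk : 1 ≤ k) :
    (((Icc 1 (m + 1)).powersetCard k).filter (1 ∈ ·)).card = m.choose (k - 1) := by
  simpa using card_filter_powersetCard_subset {1} (Icc 1 (m + 1)) k (by simp) (by simpa using hk)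

def shiftUp : Finset ℕ ↪ Finset ℕ := (mapEmbedding (addRightEmbedding 1)).toEmbedding

theorem shiftUp_apply (A : Finset ℕ) : shiftUp A = A.map (addRightEmbedding 1) := rfl

theorem shiftUp_Icc (m : ℕ) : shiftUp (Icc 1 m) = (Icc 1 (m + 1)).erase 1 := by
  rw [shiftUp_apply, map_add_right_Icc, Icc_erase_left, Icc_add_one_left_eq_Ioc]

theorem shiftUp_subset_Icc_iff {A : Finset ℕ} {m : ℕ} :
    shiftUp A ⊆ (Icc 1 (m + 1)).erase 1 ↔ A ⊆ Icc 1 m := by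
  rw [← shiftUp_Icc, shiftUp_apply, shiftUp_apply, map_subset_map]

theorem exists_shiftUp_eq {A : Finset ℕ} {m : ℕ} (hA : A ⊆ (Icc 1 (m + 1)).erase 1) :
    ∃ A' ⊆ Icc 1 m, shiftUp A' = A := by
  rw [← shiftUp_Icc, shiftUp_apply, subset_map_iff] at hA
  obtain ⟨A', hA', rfl⟩ := hA
  exact ⟨A', hA', rfl⟩

theorem card_shiftUp (A : Finset ℕ) : (shiftUp A).card = A.card := card_map _

theorem powersetCard_shiftUp (k : ℕ) (A : Finset ℕ) :
    (shiftUp A).powersetCard k = (A.powersetCard k).map shiftUp :=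
  powersetCard_map _ _ _

theorem shiftLE_shiftUp_iff {A B : Finset ℕ} :
    shiftLE (shiftUp A) (shiftUp B) ↔ shiftLE A B := by
  have hsort (C : Finset ℕ) : (shiftUp C).sort (· ≤ ·) = (C.sort (· ≤ ·)).map (· + 1) :=
    ((strictMono_id.add_const 1).strictMonoOn _).map_finsetSort.symm
  unfold shiftLE
  rw [hsort, hsort, List.forall₂_map_left_iff, List.forall₂_map_right_iff]
  simp

theorem disjoint_shiftUp_iff {A B : Finset ℕ} :
    Disjoint (shiftUp A) (shiftUp B) ↔ Disjoint A B := disjoint_map _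

theorem pairwiseDisjoint_map_shiftUp_iff {M : Finset (Finset ℕ)} :
    (M.map shiftUp : Set (Finset ℕ)).PairwiseDisjoint id ↔
      (M : Set (Finset ℕ)).PairwiseDisjoint id := by
  rw [coe_map, shiftUp.injective.injOn.pairwiseDisjoint_image]
  simp [Set.PairwiseDisjoint, Set.Pairwise, Function.onFun, disjoint_shiftUp_iff]

theorem matchingLE_map_shiftUp_iff {G : Finset (Finset ℕ)} {t : ℕ} :
    MatchingLE (G.map shiftUp) t ↔ MatchingLE G t := by
  refine ⟨fun h M hM hMd => ?_, fun h M hM hMd => ?_⟩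
  · simpa using h _ (map_subset_map.mpr hM) (pairwiseDisjoint_map_shiftUp_iff.mpr hMd)
  · obtain ⟨M, hM, rfl⟩ := subset_map_iff.mp hM
    simpa using h M (map_subset_map.mp hM) (pairwiseDisjoint_map_shiftUp_iff.mp hMd)

theorem hasMatching_map_shiftUp_iff {G : Finset (Finset ℕ)} {t : ℕ} :
    HasMatching (G.map shiftUp) t ↔ HasMatching G t := by
  refine ⟨fun ⟨M, hM, hMd, hMc⟩ => ?_, fun ⟨M, hM, hMd, hMc⟩ => ?_⟩
  · obtain ⟨M, hM, rfl⟩ := subset_map_iff.mp hM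
    exact ⟨M, map_subset_map.mp hM, pairwiseDisjoint_map_shiftUp_iff.mp hMd, by simpa using hMc⟩
  · exact ⟨M.map shiftUp, map_subset_map.mpr hM, pairwiseDisjoint_map_shiftUp_iff.mpr hMd,
      by simpa using hMc⟩

theorem hasClique_of_hasClique_succ {G H : Finset (Finset ℕ)} {m k q : ℕ}
    (hHG : ∀ A ∈ H, 1 ∉ A → A ∈ G.map shiftUp) (hH : HasClique (m + 1) H k (q + 1)) :
    HasClique m G k q := by
  obtain ⟨Q, hQ, hQc, hQH⟩ := hH
  obtain ⟨R, hRQ, hRc⟩ : ∃ R ⊆ Q.erase 1, R.card = q :=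
    exists_subset_card_eq (by have := pred_card_le_card_erase (s := Q) (a := 1); omega)
  obtain ⟨R, hR, rfl⟩ := exists_shiftUp_eq (hRQ.trans (erase_subset_erase 1 hQ))
  refine ⟨R, hR, by rwa [card_shiftUp] at hRc, fun S hS => ?_⟩
  have hSR : shiftUp S ∈ (shiftUp R).powersetCard k := by
    rw [powersetCard_shiftUp]; exact mem_map_of_mem _ hS
  have hSQ : shiftUp S ⊆ Q.erase 1 := (mem_powersetCard.mp hSR).1.trans hRQ
  have hSH : shiftUp S ∈ H :=
    hQH (powersetCard_mono (hRQ.trans (erase_subset _ _)) hSR)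
  exact (mem_map' shiftUp).mp (hHG _ hSH fun h => by simpa using hSQ h)

theorem hasClique_succ_of_hasClique {G H : Finset (Finset ℕ)} {m k : ℕ} {Q : Finset ℕ}
    (hGH : G.map shiftUp ⊆ H) (hQ : Q ⊆ Icc 1 m) (hQG : Q.powersetCard k ⊆ G)
    (h1 : ∀ S ∈ (insert 1 (shiftUp Q)).powersetCard k, 1 ∈ S → S ∈ H) :
    HasClique (m + 1) H k (Q.card + 1) := by
  have hQ' : shiftUp Q ⊆ (Icc 1 (m + 1)).erase 1 := shiftUp_subset_Icc_iff.mpr hQ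
  refine ⟨insert 1 (shiftUp Q), insert_subset (by simp) (hQ'.trans (erase_subset _ _)), ?_,
    fun S hS => ?_⟩
  · rw [card_insert_of_notMem fun h => by simpa using hQ' h, card_shiftUp]
  by_cases hS1 : 1 ∈ S
  · exact h1 S hS hS1
  have hSQ : S ∈ (shiftUp Q).powersetCard k := by
    rw [mem_powersetCard] at hS ⊢
    exact ⟨(subset_insert_iff_of_notMem hS1).mp hS.1, hS.2⟩
  rw [powersetCard_shiftUp] at hSQ
  exact hGH (map_subset_map.mpr hQG hSQ)

theorem exists_map_shiftUp_eq_filter {m k : ℕ} {F : Finset (Finset ℕ)}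
    (hF : F ⊆ (Icc 1 (m + 1)).powersetCard k) :
    ∃ G ⊆ (Icc 1 m).powersetCard k, G.map shiftUp = F.filter (1 ∉ ·) := by
  have hF' : F.filter (1 ∉ ·) ⊆ ((Icc 1 m).powersetCard k).map shiftUp := by
    rw [← powersetCard_shiftUp, shiftUp_Icc]
    intro A hA
    obtain ⟨hA, h1⟩ := mem_filter.mp hA
    obtain ⟨hAn, hAk⟩ := mem_powersetCard.mp (hF hA)
    exact mem_powersetCard.mpr ⟨subset_erase.mpr ⟨hAn, h1⟩, hAk⟩
  obtain ⟨G, hG, hGF⟩ := subset_map_iff.mp hF'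
  exact ⟨G, hG, hGF.symm⟩

theorem IsShifted.of_map_shiftUp {m : ℕ} {F G : Finset (Finset ℕ)} (hF : IsShifted (m + 1) F)
    (hG : G.map shiftUp = F.filter (1 ∉ ·)) : IsShifted m G := by
  intro B hB A hA hAB
  have hA' := shiftUp_subset_Icc_iff.mpr hA
  have hBF : shiftUp B ∈ F.filter (1 ∉ ·) := hG ▸ mem_map_of_mem _ hB
  have hAF : shiftUp A ∈ F.filter (1 ∉ ·) :=
    mem_filter.mpr ⟨hF _ (mem_filter.mp hBF).1 _ (hA'.trans (erase_subset _ _))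
      (shiftLE_shiftUp_iff.mpr hAB), fun h => by simpa using hA' h⟩
  rw [← hG] at hAF
  exact (mem_map' _).mp hAF

theorem cliqueEq_of_map_shiftUp_eq_filter {m k p : ℕ} {F G : Finset (Finset ℕ)}
    (hF : IsShifted (m + 1) F) (hG : G.map shiftUp = F.filter (1 ∉ ·))
    (hFq : CliqueEq (m + 1) F k (p + 1)) (hkp : k ≤ p + 1) : CliqueEq m G k p := by
  have hGF : G.map shiftUp ⊆ F := hG ▸ filter_subset _ _
  refine ⟨hasClique_of_hasClique_succ (fun A hA h1 => hG ▸ mem_filter.mpr ⟨hA, h1⟩) hFq.1, ?_⟩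
  rintro ⟨Q, hQ, hQc, hQG⟩
  have hQF : (shiftUp Q).powersetCard k ⊆ F := by
    rw [powersetCard_shiftUp]; exact (map_subset_map.mpr hQG).trans hGF
  exact hFq.2 (hQc ▸ hasClique_succ_of_hasClique hGF hQ hQG fun S hS h1 =>
    hF.mem_of_one_mem (shiftUp_subset_Icc_iff.mpr hQ) (by rw [card_shiftUp]; omega) hQF hS h1)

def starExtension (m k : ℕ) (G : Finset (Finset ℕ)) : Finset (Finset ℕ) :=
  ((Icc 1 (m + 1)).powersetCard k).filter (1 ∈ ·) ∪ G.map shiftUp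

section starExtension

variable {m k : ℕ} {G : Finset (Finset ℕ)}

theorem map_shiftUp_subset_powersetCard (hG : G ⊆ (Icc 1 m).powersetCard k) :
    G.map shiftUp ⊆ ((Icc 1 (m + 1)).erase 1).powersetCard k := by
  rw [← shiftUp_Icc, powersetCard_shiftUp]
  exact map_subset_map.mpr hG

theorem mem_starExtension_of_one_mem {S : Finset ℕ} (hS : S ⊆ Icc 1 (m + 1)) (hSc : S.card = k)
    (h1 : 1 ∈ S) : S ∈ starExtension m k G :=
  mem_union_left _ (mem_filter.mpr ⟨mem_powersetCard.mpr ⟨hS, hSc⟩, h1⟩)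

theorem mem_map_shiftUp_of_mem_starExtension {A : Finset ℕ} (hA : A ∈ starExtension m k G)
    (h1 : 1 ∉ A) : A ∈ G.map shiftUp :=
  (mem_union.mp hA).resolve_left fun h => h1 (mem_filter.mp h).2

theorem starExtension_subset (hG : G ⊆ (Icc 1 m).powersetCard k) :
    starExtension m k G ⊆ (Icc 1 (m + 1)).powersetCard k :=
  union_subset (filter_subset _ _)
    ((map_shiftUp_subset_powersetCard hG).trans (powersetCard_mono (erase_subset _ _)))

theorem card_starExtension (hk : 1 ≤ k) (hG : G ⊆ (Icc 1 m).powersetCard k) :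
    (starExtension m k G).card = m.choose (k - 1) + G.card := by
  have hdisj : Disjoint (((Icc 1 (m + 1)).powersetCard k).filter (1 ∈ ·)) (G.map shiftUp) :=
    disjoint_left.mpr fun A hA hA' => by
      simpa using (mem_powersetCard.mp (map_shiftUp_subset_powersetCard hG hA')).1
        (mem_filter.mp hA).2
  rw [starExtension, card_union_of_disjoint hdisj, card_filter_one_mem_powersetCard hk, card_map]

theorem isShifted_starExtension (hG : IsShifted m G) (hGk : G ⊆ (Icc 1 m).powersetCard k) :
    IsShifted (m + 1) (starExtension m k G) := by
  intro B hB A hA hAB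
  have hAc : A.card = k := hAB.card_eq.trans (mem_powersetCard.mp (starExtension_subset hGk hB)).2
  by_cases hA1 : 1 ∈ A
  · exact mem_starExtension_of_one_mem hA hAc hA1
  have hB1 : 1 ∉ B := fun hB1 => by
    obtain ⟨a, ha, ha1⟩ := exists_le_of_shiftLE hAB hB1
    obtain rfl : a = 1 := le_antisymm ha1 (mem_Icc.mp (hA ha)).1
    exact hA1 ha
  obtain ⟨B', hB', rfl⟩ := mem_map.mp (mem_map_shiftUp_of_mem_starExtension hB hB1)
  obtain ⟨A', hA', rfl⟩ := exists_shiftUp_eq (subset_erase.mpr ⟨hA, hA1⟩)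
  exact mem_union_right _ (mem_map_of_mem _ (hG B' hB' A' hA' (shiftLE_shiftUp_iff.mp hAB)))

theorem matchingEq_starExtension (hk : 1 ≤ k) (hGk : G ⊆ (Icc 1 m).powersetCard k) {t : ℕ}
    (hG : MatchingEq G t) (hn : (t + 1) * k ≤ m + 1) :
    MatchingEq (starExtension m k G) (t + 1) := by
  refine ⟨(matchingLE_map_shiftUp_iff.mpr hG.1).succ_of_forall_notMem
    fun A hA h1 => mem_map_shiftUp_of_mem_starExtension hA h1, ?_⟩
  obtain ⟨M, hMG, hMd, hMc⟩ := hasMatching_map_shiftUp_iff.mpr hG.2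
  have hMk (A) (hA : A ∈ M) : A ⊆ (Icc 1 (m + 1)).erase 1 ∧ A.card = k :=
    mem_powersetCard.mp (map_shiftUp_subset_powersetCard hGk (hMG hA))
  obtain ⟨S, hS, hS1, hSc, hSM⟩ := exists_disjoint_of_card_le hMd
    (fun A hA => ⟨(hMk A hA).1.trans (erase_subset _ _), (hMk A hA).2⟩) hk
    (show 1 ∈ Icc 1 (m + 1) by simp) (fun A hA h => by simpa using (hMk A hA).1 h)
    (by simpa [hMc] using hn)
  have hSM' : S ∉ M := fun h => by simpa using (hMk S h).1 hS1
  refine ⟨insert S M, insert_subset (mem_starExtension_of_one_mem hS hSc hS1)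
    (hMG.trans subset_union_right), ?_, by rw [card_insert_of_notMem hSM', hMc]⟩
  rw [coe_insert]
  exact hMd.insert fun A hA _ => hSM A hA

theorem cliqueEq_starExtension {p : ℕ} (hG : CliqueEq m G k p) :
    CliqueEq (m + 1) (starExtension m k G) k (p + 1) := by
  refine ⟨?_, fun h => hG.2 (hasClique_of_hasClique_succ
    (fun A hA h1 => mem_map_shiftUp_of_mem_starExtension hA h1) h)⟩
  obtain ⟨Q, hQ, rfl, hQG⟩ := hG.1
  have hQ' : insert 1 (shiftUp Q) ⊆ Icc 1 (m + 1) :=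
    insert_subset (by simp) ((shiftUp_subset_Icc_iff.mpr hQ).trans (erase_subset _ _))
  exact hasClique_succ_of_hasClique subset_union_right hQ hQG fun S hS h1 =>
    mem_starExtension_of_one_mem ((mem_powersetCard.mp hS).1.trans hQ')
      (mem_powersetCard.mp hS).2 h1

end starExtension

def Admissible (n q k s : ℕ) (F : Finset (Finset ℕ)) : Prop :=
  F ⊆ (Icc 1 n).powersetCard k ∧ IsShifted n F ∧ MatchingEq F s ∧ CliqueEq n F k q

section mstar

variable {n q k s : ℕ} {F : Finset (Finset ℕ)}

theorem mstar_eq_sSup : mstar n q k s = sSup {c | ∃ F, Admissible n q k s F ∧ F.card = c} := by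
  simp only [mstar, Admissible, and_assoc]

theorem bddAbove_admissible_card :
    BddAbove {c | ∃ F, Admissible n q k s F ∧ F.card = c} :=
  ⟨((Icc 1 n).powersetCard k).card, by rintro _ ⟨F, hF, rfl⟩; exact card_le_card hF.1⟩

theorem card_le_mstar (hF : Admissible n q k s F) : F.card ≤ mstar n q k s :=
  mstar_eq_sSup ▸ le_csSup bddAbove_admissible_card ⟨F, hF, rfl⟩

theorem exists_admissible_card_eq_mstar (hF : Admissible n q k s F) :
    ∃ G, Admissible n q k s G ∧ G.card = mstar n q k s := by
  have hne : {c | ∃ F, Admissible n q k s F ∧ F.card = c}.Nonempty := ⟨F.card, F, hF, rfl⟩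
  obtain ⟨G, hG, hGc⟩ := Nat.sSup_mem hne bddAbove_admissible_card
  exact ⟨G, hG, hGc.trans mstar_eq_sSup.symm⟩

end mstar

theorem admissible_of_map_shiftUp_eq_filter {m p k t : ℕ} {F G : Finset (Finset ℕ)}
    (hF : Admissible (m + 1) (p + 1) k (t + 1) F) (hred : MatchingEq (F.filter (1 ∉ ·)) t)
    (hGk : G ⊆ (Icc 1 m).powersetCard k) (hGF : G.map shiftUp = F.filter (1 ∉ ·)) :
    Admissible m p k t G := by
  obtain ⟨hFk, hFs, hFm, hFq⟩ := hF
  have hFne : F.Nonempty := by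
    obtain ⟨M, hMF, -, hM⟩ := hFm.2
    exact (card_pos.mp (by omega)).mono hMF
  refine ⟨hGk, hFs.of_map_shiftUp hGF, ?_, cliqueEq_of_map_shiftUp_eq_filter hFs hGF hFq
    (le_of_not_hasClique_succ hFk hFne hFq.2)⟩
  rw [← hGF] at hred
  exact ⟨matchingLE_map_shiftUp_iff.mp hred.1, hasMatching_map_shiftUp_iff.mp hred.2⟩

theorem admissible_starExtension {m p k t : ℕ} {G : Finset (Finset ℕ)} (hk : 1 ≤ k)
    (hG : Admissible m p k t G) (hn : (t + 1) * k ≤ m + 1) :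
    Admissible (m + 1) (p + 1) k (t + 1) (starExtension m k G) :=
  ⟨starExtension_subset hG.1, isShifted_starExtension hG.2.1 hG.1,
    matchingEq_starExtension hk hG.1 hG.2.2.1 hn, cliqueEq_starExtension hG.2.2.2⟩

theorem stmt_17 (n q k s : ℕ) (hk : 1 ≤ k) (hs : 1 ≤ s) (hq : 1 ≤ q)
    (F : Finset (Finset ℕ))
    (hF : F ⊆ (Finset.Icc 1 n).powersetCard k) (hshift : IsShifted n F)
    (hmatch : MatchingEq F s) (hclq : CliqueEq n F k q)
    (hmax : F.card = mstar n q k s)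
    (hred : MatchingEq (F.filter (fun A => 1 ∉ A)) (s - 1)) :
    mstar n q k s = (n - 1).choose (k - 1) + mstar (n - 1) (q - 1) k (s - 1) := by
  obtain ⟨t, rfl⟩ := Nat.exists_eq_add_of_le' hs
  obtain ⟨p, rfl⟩ := Nat.exists_eq_add_of_le' hq
  have hsk := hmatch.2.mul_le hF
  obtain ⟨m, rfl⟩ : ∃ m, n = m + 1 := Nat.exists_eq_add_of_le' (by nlinarith)
  simp only [Nat.add_sub_cancel] at hred ⊢
  obtain ⟨G, hGk, hGF⟩ := exists_map_shiftUp_eq_filter hF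
  have hG := admissible_of_map_shiftUp_eq_filter ⟨hF, hshift, hmatch, hclq⟩ hred hGk hGF
  obtain ⟨G', hG', hG'c⟩ := exists_admissible_card_eq_mstar hG
  refine le_antisymm ?_ ?_
  · calc mstar (m + 1) (p + 1) k (t + 1) = F.card := hmax.symm
      _ = (F.filter (1 ∈ ·)).card + (F.filter (1 ∉ ·)).card :=
        (card_filter_add_card_filter_not _).symm
      _ ≤ m.choose (k - 1) + mstar m p k t := by
        gcongr
        · exact card_filter_one_mem_powersetCard hk ▸ card_le_card (filter_subset_filter _ hF)
        · rw [← hGF, card_map]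
          exact card_le_mstar hG
  · rw [← hG'c, ← card_starExtension hk hG'.1]
    exact card_le_mstar (admissible_starExtension hk hG' hsk)
end
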